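/- arXiv:math/0010002 — 8 statements merged into one kernel-verified Lean document; each statement's English description precedes it below -/
import Mathlib

section
/- Fix an integer r ≥ 1 and, for each j with 1 ≤ j ≤ r, nonnegative integers α_{0,j}, β_{0,j} with α_{0,j} + β_{0,j} ≥ j. Let (ε_n)_{n≥0} be any sequence with ε_n ∈ {1,2}, and define recursively, for all j simultaneously, (α_{n+1,j}, β_{n+1,j}) = (α_{n,j} + β_{n,j}, β_{n,j}) if ε_n = 1, and (α_{n+1,j}, β_{n+1,j}) = (α_{n,j}, α_{n,j} + β_{n,j}) if ε_n = 2. For 1 ≤ i, j ≤ r set δ_{n,i,j} = (α_{n,i}/i − α_{n,j}/j)·(β_{n,i}/i − β_{n,j}/j) ∈ ℚ. Then for all n ≥ 0 and all 1 ≤ i, j ≤ r: (1) δ_{n+1,i,j} ≥ δ_{n,i,j}; and (2) if δ_{n,i,j} < 0 then δ_{n+1,i,j} − δ_{n,i,j} ≥ 1/r⁴. -/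
/-!
After the transform `ε_n = 1` the first factor of `δ_{n,i,j}` becomes the sum of both factors while
the second is unchanged, so `δ` grows by the square of the second factor; symmetrically for
`ε_n = 2`. If `δ_{n,i,j} < 0`, the factor being squared is a nonzero difference `a/i - b/j`,
whose numerator over `i j ≤ r²` is a nonzero integer, so its square is at least `1/r⁴`.
-/

lemma inv_pow_four_le_sq_div_sub_div {a b i j r : ℕ} (hi : 1 ≤ i) (hir : i ≤ r) (hj : 1 ≤ j)
    (hjr : j ≤ r) (h : (a : ℚ) / i - (b : ℚ) / j ≠ 0) :
    1 / (r : ℚ) ^ 4 ≤ ((a : ℚ) / i - (b : ℚ) / j) ^ 2 := by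
  have hi' : (0 : ℚ) < i := by exact_mod_cast hi
  have hj' : (0 : ℚ) < j := by exact_mod_cast hj
  set m : ℤ := a * j - b * i
  have hdiff : (a : ℚ) / i - (b : ℚ) / j = m / (i * j) := by
    push_cast [m]
    field_simp
  have hm : m ≠ 0 := by
    rintro hm
    exact h (by simp [hdiff, hm])
  have hm_sq : (1 : ℚ) ≤ (m : ℚ) ^ 2 := by exact_mod_cast (one_le_sq_iff_one_le_abs _).mpr (Int.one_le_abs hm)
  have hij : (i : ℚ) * j ≤ (r : ℚ) ^ 2 := by
    rw [sq]
    gcongr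
  calc 1 / (r : ℚ) ^ 4 = 1 / ((r : ℚ) ^ 2) ^ 2 := by ring
    _ ≤ 1 / ((i : ℚ) * j) ^ 2 := by gcongr
    _ ≤ (m : ℚ) ^ 2 / ((i : ℚ) * j) ^ 2 := by gcongr
    _ = ((a : ℚ) / i - (b : ℚ) / j) ^ 2 := by rw [hdiff, div_pow]

lemma le_and_bound_of_sub_mul_eq_sq {x y z c : ℚ} (hz : z - x * y = x ^ 2)
    (hc : x ≠ 0 → c ≤ x ^ 2) : x * y ≤ z ∧ (x * y < 0 → c ≤ z - x * y) := by
  refine ⟨by nlinarith [sq_nonneg x], fun hneg => hz ▸ hc ?_⟩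
  rintro rfl
  simp at hneg

theorem delta_monotone_under_quadratic_transforms_general
    (r : ℕ)
    (α β : ℕ → ℕ → ℕ)
    (ε : ℕ → ℕ) (hε : ∀ n, ε n = 1 ∨ ε n = 2)
    (hrec1 : ∀ n j, 1 ≤ j → j ≤ r → ε n = 1 →
      α (n + 1) j = α n j + β n j ∧ β (n + 1) j = β n j)
    (hrec2 : ∀ n j, 1 ≤ j → j ≤ r → ε n = 2 →
      α (n + 1) j = α n j ∧ β (n + 1) j = α n j + β n j)
    (δ : ℕ → ℕ → ℕ → ℚ)
    (hδ : ∀ n i j, δ n i j =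
      ((α n i : ℚ) / i - (α n j : ℚ) / j) * ((β n i : ℚ) / i - (β n j : ℚ) / j)) :
    ∀ n i j, 1 ≤ i → i ≤ r → 1 ≤ j → j ≤ r →
      δ n i j ≤ δ (n + 1) i j ∧
      (δ n i j < 0 → 1 / (r : ℚ) ^ 4 ≤ δ (n + 1) i j - δ n i j) := by
  intro n i j hi hir hj hjr
  rcases hε n with hε1 | hε2
  · obtain ⟨hαi, hβi⟩ := hrec1 n i hi hir hε1
    obtain ⟨hαj, hβj⟩ := hrec1 n j hj hjr hε1
    rw [hδ n, mul_comm]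
    refine le_and_bound_of_sub_mul_eq_sq ?_ (inv_pow_four_le_sq_div_sub_div hi hir hj hjr)
    rw [hδ, hαi, hαj, hβi, hβj]
    push_cast
    ring
  · obtain ⟨hαi, hβi⟩ := hrec2 n i hi hir hε2
    obtain ⟨hαj, hβj⟩ := hrec2 n j hj hjr hε2
    rw [hδ n]
    refine le_and_bound_of_sub_mul_eq_sq ?_ (inv_pow_four_le_sq_div_sub_div hi hir hj hjr)
    rw [hδ, hαi, hαj, hβi, hβj]
    push_cast
    ring

/-- monotonicity of the products
`δ_{n,i,j} = (α_{n,i}/i − α_{n,j}/j)·(β_{n,i}/i − β_{n,j}/j)` under the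
exponent recursion coming from quadratic transforms. -/
theorem delta_monotone_under_quadratic_transforms
    (r : ℕ) (hr : 1 ≤ r)
    (α β : ℕ → ℕ → ℕ)
    (hinit : ∀ j, 1 ≤ j → j ≤ r → j ≤ α 0 j + β 0 j)
    (ε : ℕ → ℕ) (hε : ∀ n, ε n = 1 ∨ ε n = 2)
    (hrec1 : ∀ n j, 1 ≤ j → j ≤ r → ε n = 1 →
      α (n + 1) j = α n j + β n j ∧ β (n + 1) j = β n j)
    (hrec2 : ∀ n j, 1 ≤ j → j ≤ r → ε n = 2 →
      α (n + 1) j = α n j ∧ β (n + 1) j = α n j + β n j)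
    (δ : ℕ → ℕ → ℕ → ℚ)
    (hδ : ∀ n i j, δ n i j =
      ((α n i : ℚ) / i - (α n j : ℚ) / j) * ((β n i : ℚ) / i - (β n j : ℚ) / j)) :
    ∀ n i j, 1 ≤ i → i ≤ r → 1 ≤ j → j ≤ r →
      δ n i j ≤ δ (n + 1) i j ∧
      (δ n i j < 0 → 1 / (r : ℚ) ^ 4 ≤ δ (n + 1) i j - δ n i j) :=
  delta_monotone_under_quadratic_transforms_general r α β ε hε hrec1 hrec2 δ hδ
end

section
/- Fix an integer r ≥ 1 and, for each j with 1 ≤ j ≤ r, nonnegative integers α_{0,j}, β_{0,j} with α_{0,j} + β_{0,j} ≥ j. Let (ε_n)_{n≥0} be any sequence with ε_n ∈ {1,2}, and define recursively, for all j simultaneously, (α_{n+1,j}, β_{n+1,j}) = (α_{n,j} + β_{n,j}, β_{n,j}) if ε_n = 1, and (α_{n+1,j}, β_{n+1,j}) = (α_{n,j}, α_{n,j} + β_{n,j}) if ε_n = 2. Then: (1) there exist n₀ ≥ 0 and an index i with 1 ≤ i ≤ r such that for all n ≥ n₀ and all 1 ≤ j ≤ r one has α_{n,i}/i ≤ α_{n,j}/j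 and β_{n,i}/i ≤ β_{n,j}/j; and (2) there exists n₁ ≥ n₀ such that {α_{n₁,i}/i} + {β_{n₁,i}/i} < 1, where {t} = t − ⌊t⌋ denotes the fractional part of a rational number t. -/
/-!
For indices `i, j` the scaled differences `(i α_j - j α_i, i β_j - j β_i)` undergo the same
shears `(x, y) ↦ (x + y, y)`, `(x, y) ↦ (x, x + y)` as the exponents. A shear keeps a vector with
both coordinates `≥ 0` (or both `≤ 0`) in that quadrant, and a vector with coordinates of opposite
signs either enters such a quadrant or has its `ℓ¹`-norm strictly decreased. So from some stage on
any two indices are comparable for good, and an index minimising `(α_j + β_j) / j` at that stage is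
componentwise minimal from then on. For this index `i`, a shear applied while
`α_i mod i + β_i mod i ≥ i` carries in the addition and lowers that sum of residues, so the sum
eventually drops below `i`.
-/

open Filter Finset

theorem exists_ge_of_measure_decreasing {P : ℕ → Prop} (f : ℕ → ℕ)
    (hf : ∀ n, ¬P n → ¬P (n + 1) → f (n + 1) < f n) (n₀ : ℕ) : ∃ n, n₀ ≤ n ∧ P n := by
  by_contra! hP
  have hdesc : ∀ m, f (n₀ + m) + m ≤ f n₀ := by
    intro m
    induction m with
    | zero => simp
    | succ m ih =>
      have := hf (n₀ + m) (hP _ (by omega)) (hP _ (by omega))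
      show f (n₀ + m + 1) + (m + 1) ≤ f n₀
      omega
  have := hdesc (f n₀ + 1)
  omega

theorem Finset.exists_le_and_le_of_forall_comparable {ι R : Type*} [AddCommGroup R]
    [LinearOrder R] [IsOrderedAddMonoid R] (s : Finset ι) (hs : s.Nonempty) (f g : ι → R)
    (hcomp : ∀ j ∈ s, ∀ k ∈ s, (f j ≤ f k ∧ g j ≤ g k) ∨ (f k ≤ f j ∧ g k ≤ g j)) :
    ∃ i ∈ s, ∀ j ∈ s, f i ≤ f j ∧ g i ≤ g j := by
  obtain ⟨i, hi, hmin⟩ := s.exists_min_image (f + g) hs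
  refine ⟨i, hi, fun j hj => ?_⟩
  have hsum : f i + g i ≤ f j + g j := hmin j hj
  rcases hcomp i hi j hj with h | ⟨hf, hg⟩
  · exact h
  · exact ⟨le_of_add_le_add_right (hsum.trans (add_le_add_right hg (f j))),
      le_of_add_le_add_left (hsum.trans (add_le_add_left hf (g j)))⟩

variable {R : Type*}

def IsShearSequence [Add R] (x y : ℕ → R) : Prop :=
  ∀ n, (x (n + 1) = x n + y n ∧ y (n + 1) = y n) ∨ (x (n + 1) = x n ∧ y (n + 1) = x n + y n)

namespace IsShearSequence

variable {x y : ℕ → R}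

theorem neg [AddCommGroup R] (h : IsShearSequence x y) : IsShearSequence (-x) (-y) := fun n =>
  (h n).imp (fun ⟨hx, hy⟩ => by simp [hx, hy, add_comm])
    (fun ⟨hx, hy⟩ => by simp [hx, hy, add_comm])

theorem nonneg_of_le [AddCommMonoid R] [PartialOrder R] [IsOrderedAddMonoid R]
    (h : IsShearSequence x y) {n m : ℕ} (hnm : n ≤ m) (hx : 0 ≤ x n) (hy : 0 ≤ y n) :
    0 ≤ x m ∧ 0 ≤ y m := by
  induction m, hnm using Nat.le_induction with
  | base => exact ⟨hx, hy⟩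
  | succ m _ ih =>
    rcases h m with ⟨hx', hy'⟩ | ⟨hx', hy'⟩
    · exact ⟨hx' ▸ add_nonneg ih.1 ih.2, hy' ▸ ih.2⟩
    · exact ⟨hx' ▸ ih.1, hy' ▸ add_nonneg ih.1 ih.2⟩

theorem exists_nonneg_or_nonpos {x y : ℕ → ℤ} (h : IsShearSequence x y) (n₀ : ℕ) :
    ∃ n, n₀ ≤ n ∧ ((0 ≤ x n ∧ 0 ≤ y n) ∨ (x n ≤ 0 ∧ y n ≤ 0)) := by
  refine exists_ge_of_measure_decreasing (fun n => (x n).natAbs + (y n).natAbs)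
    (fun n hn hn' => ?_) n₀
  rcases h n with ⟨hx, hy⟩ | ⟨hx, hy⟩ <;> rw [hx, hy] <;> omega

theorem eventually_nonneg_or_nonpos {x y : ℕ → ℤ} (h : IsShearSequence x y) :
    ∀ᶠ n in atTop, (0 ≤ x n ∧ 0 ≤ y n) ∨ (x n ≤ 0 ∧ y n ≤ 0) := by
  obtain ⟨N, -, hN | hN⟩ := h.exists_nonneg_or_nonpos 0
  · exact eventually_atTop.2 ⟨N, fun n hn => .inl (h.nonneg_of_le hn hN.1 hN.2)⟩
  · refine eventually_atTop.2 ⟨N, fun n hn => .inr ?_⟩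
    simpa using h.neg.nonneg_of_le hn (by simpa using hN.1) (by simpa using hN.2)

theorem exists_mod_add_mod_lt {x y : ℕ → ℕ} (h : IsShearSequence x y) {d : ℕ} (hd : 0 < d)
    (n₀ : ℕ) : ∃ n, n₀ ≤ n ∧ x n % d + y n % d < d := by
  refine exists_ge_of_measure_decreasing (fun n => x n % d + y n % d) (fun n hn _ => ?_) n₀
  have hcarry := Nat.add_mod_add_of_le_add_mod (not_lt.1 hn)
  have hx := Nat.mod_lt (x n) hd
  have hy := Nat.mod_lt (y n) hd
  rcases h n with ⟨hx', hy'⟩ | ⟨hx', hy'⟩ <;> simp only [hx', hy'] <;> omega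

end IsShearSequence

theorem Int.fract_div_add_fract_div_lt_one_iff {k : Type*} [Field k] [LinearOrder k]
    [IsStrictOrderedRing k] [FloorRing k] {a b d : ℕ} (hd : 0 < d) :
    Int.fract ((a : k) / d) + Int.fract ((b : k) / d) < 1 ↔ a % d + b % d < d := by
  rw [Int.fract_div_natCast_eq_div_natCast_mod, Int.fract_div_natCast_eq_div_natCast_mod,
    ← add_div, div_lt_one (by positivity)]
  exact_mod_cast Iff.rfl

/-- `i * j` times `a n j / j - a n i / i`, kept in `ℤ` so that the descent argument applies. -/
def crossDiff (a : ℕ → ℕ → ℕ) (n i j : ℕ) : ℤ := i * a n j - j * a n i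

theorem crossDiff_nonneg_iff {a : ℕ → ℕ → ℕ} {n i j : ℕ} (hi : 0 < i) (hj : 0 < j) :
    0 ≤ crossDiff a n i j ↔ (a n i : ℚ) / i ≤ a n j / j := by
  rw [div_le_div_iff₀ (by positivity) (by positivity), crossDiff, sub_nonneg,
    mul_comm (a n i : ℚ), mul_comm (a n j : ℚ)]
  exact_mod_cast Iff.rfl

theorem crossDiff_nonpos_iff {a : ℕ → ℕ → ℕ} {n i j : ℕ} (hi : 0 < i) (hj : 0 < j) :
    crossDiff a n i j ≤ 0 ↔ (a n j : ℚ) / j ≤ a n i / i := by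
  rw [← crossDiff_nonneg_iff hj hi, crossDiff, crossDiff, ← neg_nonneg, neg_sub]

theorem isShearSequence_crossDiff {r : ℕ} {α β : ℕ → ℕ → ℕ} {ε : ℕ → ℕ}
    (hε : ∀ n, ε n = 1 ∨ ε n = 2)
    (hrec1 : ∀ n j, 1 ≤ j → j ≤ r → ε n = 1 →
      α (n + 1) j = α n j + β n j ∧ β (n + 1) j = β n j)
    (hrec2 : ∀ n j, 1 ≤ j → j ≤ r → ε n = 2 →
      α (n + 1) j = α n j ∧ β (n + 1) j = α n j + β n j)
    {i j : ℕ} (hi : i ∈ Icc 1 r) (hj : j ∈ Icc 1 r) :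
    IsShearSequence (fun n => crossDiff α n i j) (fun n => crossDiff β n i j) := by
  rw [mem_Icc] at hi hj
  intro n
  rcases hε n with hε1 | hε2
  · obtain ⟨hαi, hβi⟩ := hrec1 n i hi.1 hi.2 hε1
    obtain ⟨hαj, hβj⟩ := hrec1 n j hj.1 hj.2 hε1
    refine .inl ⟨?_, by simp only [crossDiff, hβi, hβj]⟩
    simp only [crossDiff, hαi, hαj]
    push_cast
    ring
  · obtain ⟨hαi, hβi⟩ := hrec2 n i hi.1 hi.2 hε2
    obtain ⟨hαj, hβj⟩ := hrec2 n j hj.1 hj.2 hε2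
    refine .inr ⟨by simp only [crossDiff, hαi, hαj], ?_⟩
    simp only [crossDiff, hβi, hβj]
    push_cast
    ring

theorem exponents_stabilize_under_quadratic_transforms_general
    (r : ℕ) (hr : 1 ≤ r)
    (α β : ℕ → ℕ → ℕ)
    (ε : ℕ → ℕ) (hε : ∀ n, ε n = 1 ∨ ε n = 2)
    (hrec1 : ∀ n j, 1 ≤ j → j ≤ r → ε n = 1 →
      α (n + 1) j = α n j + β n j ∧ β (n + 1) j = β n j)
    (hrec2 : ∀ n j, 1 ≤ j → j ≤ r → ε n = 2 →
      α (n + 1) j = α n j ∧ β (n + 1) j = α n j + β n j) :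
    ∃ n₀ i, 1 ≤ i ∧ i ≤ r ∧
      (∀ n, n₀ ≤ n → ∀ j, 1 ≤ j → j ≤ r →
        (α n i : ℚ) / i ≤ (α n j : ℚ) / j ∧ (β n i : ℚ) / i ≤ (β n j : ℚ) / j) ∧
      ∃ n₁, n₀ ≤ n₁ ∧
        Int.fract ((α n₁ i : ℚ) / i) + Int.fract ((β n₁ i : ℚ) / i) < 1 := by
  have hpos : ∀ j ∈ Icc 1 r, 0 < j := fun j hj => (mem_Icc.1 hj).1
  have hshear := fun {i j : ℕ} => isShearSequence_crossDiff hε hrec1 hrec2 (i := i) (j := j)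
  have hcomparable : ∀ᶠ n in atTop, ∀ j ∈ Icc 1 r, ∀ k ∈ Icc 1 r,
      (0 ≤ crossDiff α n j k ∧ 0 ≤ crossDiff β n j k) ∨
        (crossDiff α n j k ≤ 0 ∧ crossDiff β n j k ≤ 0) := by
    simp only [eventually_all_finset]
    exact fun j hj k hk => (hshear hj hk).eventually_nonneg_or_nonpos
  obtain ⟨n₀, hn₀⟩ := hcomparable.exists
  obtain ⟨i, hi, hmin⟩ := (Icc 1 r).exists_le_and_le_of_forall_comparable
    ⟨1, mem_Icc.2 ⟨le_rfl, hr⟩⟩ (fun j => (α n₀ j : ℚ) / j) (fun j => (β n₀ j : ℚ) / j)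
    fun j hj k hk => by
      simpa only [crossDiff_nonneg_iff (hpos j hj) (hpos k hk),
        crossDiff_nonpos_iff (hpos j hj) (hpos k hk)] using hn₀ j hj k hk
  obtain ⟨hi1, hir⟩ := mem_Icc.1 hi
  refine ⟨n₀, i, hi1, hir, fun n hn j hj1 hjr => ?_, ?_⟩
  · have hj : j ∈ Icc 1 r := mem_Icc.2 ⟨hj1, hjr⟩
    have hi0 := hpos i hi
    have hj0 := hpos j hj
    obtain ⟨hα, hβ⟩ := (hshear hi hj).nonneg_of_le hn
      ((crossDiff_nonneg_iff hi0 hj0).2 (hmin j hj).1)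
      ((crossDiff_nonneg_iff hi0 hj0).2 (hmin j hj).2)
    exact ⟨(crossDiff_nonneg_iff hi0 hj0).1 hα, (crossDiff_nonneg_iff hi0 hj0).1 hβ⟩
  · have hexp : IsShearSequence (α · i) (β · i) := fun n =>
      (hε n).imp (hrec1 n i hi1 hir) (hrec2 n i hi1 hir)
    obtain ⟨n₁, hn₁, hmod⟩ := hexp.exists_mod_add_mod_lt (hpos i hi) n₀
    exact ⟨n₁, hn₁, (Int.fract_div_add_fract_div_lt_one_iff (hpos i hi)).2 hmod⟩

/-- stabilization of the normalized exponent vectors under the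
exponent recursion coming from quadratic transforms, and smallness of the
fractional parts at some later stage. -/
theorem exponents_stabilize_under_quadratic_transforms
    (r : ℕ) (hr : 1 ≤ r)
    (α β : ℕ → ℕ → ℕ)
    (hinit : ∀ j, 1 ≤ j → j ≤ r → j ≤ α 0 j + β 0 j)
    (ε : ℕ → ℕ) (hε : ∀ n, ε n = 1 ∨ ε n = 2)
    (hrec1 : ∀ n j, 1 ≤ j → j ≤ r → ε n = 1 →
      α (n + 1) j = α n j + β n j ∧ β (n + 1) j = β n j)
    (hrec2 : ∀ n j, 1 ≤ j → j ≤ r → ε n = 2 →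
      α (n + 1) j = α n j ∧ β (n + 1) j = α n j + β n j) :
    ∃ n₀ i, 1 ≤ i ∧ i ≤ r ∧
      (∀ n, n₀ ≤ n → ∀ j, 1 ≤ j → j ≤ r →
        (α n i : ℚ) / i ≤ (α n j : ℚ) / j ∧ (β n i : ℚ) / i ≤ (β n j : ℚ) / j) ∧
      ∃ n₁, n₀ ≤ n₁ ∧
        Int.fract ((α n₁ i : ℚ) / i) + Int.fract ((β n₁ i : ℚ) / i) < 1 :=
  exponents_stabilize_under_quadratic_transforms_general r hr α β ε hε hrec1 hrec2
end

section
/- Fix an integer r ≥ 1. Suppose that for all n ≥ 0 and all j with 1 ≤ j ≤ r we are given pairs of nonnegative integers (α_{n,j}, β_{n,j}) such that for each n, either (α_{n+1,j}, β_{n+1,j}) = (α_{n,j} + β_{n,j} − j, β_{n,j}) for all j, or (α_{n+1,j}, β_{n+1,j}) = (α_{n,j}, α_{n,j} + β_{n,j} − j) for all j. For 1 ≤ i, j ≤ r set δ_{n,i,j} = (α_{n,i}/i − α_{n,j}/j)·(β_{n,i}/i − β_{n,j}/j) ∈ ℚ. Then for all n ≥ 0 and all 1 ≤ i, j ≤ r: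 (1) δ_{n+1,i,j} ≥ δ_{n,i,j}; and (2) if δ_{n,i,j} < 0 then δ_{n+1,i,j} − δ_{n,i,j} ≥ 1/r⁴. -/
/-!
Write `A = α_i/i - α_j/j` and `B = β_i/i - β_j/j`, so that `δ = A * B`. Since
`(α + β - j)/j = α/j + β/j - 1`, the first move replaces `A` by `A + B` and fixes `B`,
so `δ` grows by exactly `B²`; the second move symmetrically adds `A²`. If `δ < 0`, the
added difference is nonzero, and a nonzero `x/i - y/j = (j x - i y)/(i j)` with integer
numerator has square at least `1/(i j)² ≥ 1/r⁴`.
-/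

lemma one_div_sq_mul_le_sq_div_sub_div {i j : ℕ} (hi : 0 < i) (hj : 0 < j) {x y : ℤ}
    (h : (x : ℚ) / i - y / j ≠ 0) :
    1 / ((i : ℚ) * j) ^ 2 ≤ ((x : ℚ) / i - y / j) ^ 2 := by
  have hnum : (x : ℚ) / i - y / j = ((j * x - i * y : ℤ) : ℚ) / (i * j) := by
    push_cast
    field_simp
  have hk : j * x - i * y ≠ 0 := by
    rintro hk
    simp [hnum, hk] at h
  have hk_sq : (1 : ℚ) ≤ ((j * x - i * y : ℤ) : ℚ) ^ 2 := by
    exact_mod_cast Int.one_le_abs hk |>.trans (Int.le_self_sq _) |>.trans_eq (sq_abs _)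
  rw [hnum, div_pow]
  gcongr

lemma one_div_pow_four_le_sq_div_sub_div {r i j : ℕ} (hi : 0 < i) (hir : i ≤ r)
    (hj : 0 < j) (hjr : j ≤ r) {x y : ℤ} (h : (x : ℚ) / i - y / j ≠ 0) :
    1 / (r : ℚ) ^ 4 ≤ ((x : ℚ) / i - y / j) ^ 2 := by
  refine le_trans ?_ (one_div_sq_mul_le_sq_div_sub_div hi hj h)
  have hij : (i : ℚ) * j ≤ r * r := by gcongr
  rw [show (r : ℚ) ^ 4 = (r * r) ^ 2 by ring]
  gcongr

/-- `δ_{i,j}` for `α_i = a`, `α_j = c`, `β_i = b`, `β_j = d`. -/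
def pairDelta (i j : ℕ) (a c b d : ℤ) : ℚ :=
  ((a : ℚ) / i - c / j) * ((b : ℚ) / i - d / j)

namespace pairDelta

variable {i j : ℕ} (a c b d : ℤ)

lemma comm : pairDelta i j a c b d = pairDelta i j b d a c :=
  mul_comm _ _

lemma shear (hi : 0 < i) (hj : 0 < j) :
    pairDelta i j (a + b - i) (c + d - j) b d
      = pairDelta i j a c b d + ((b : ℚ) / i - d / j) ^ 2 := by
  unfold pairDelta
  push_cast
  field_simp
  ring

lemma le_shear_and_gap {r : ℕ} (hi : 0 < i) (hir : i ≤ r) (hj : 0 < j) (hjr : j ≤ r) :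
    pairDelta i j a c b d ≤ pairDelta i j (a + b - i) (c + d - j) b d ∧
      (pairDelta i j a c b d < 0 →
        1 / (r : ℚ) ^ 4 ≤ pairDelta i j (a + b - i) (c + d - j) b d - pairDelta i j a c b d) := by
  rw [shear a c b d hi hj, add_sub_cancel_left]
  refine ⟨le_add_of_nonneg_right (sq_nonneg _), fun hneg => ?_⟩
  refine one_div_pow_four_le_sq_div_sub_div hi hir hj hjr fun h0 => ?_
  simp [pairDelta, h0] at hneg

end pairDelta

theorem delta_monotone_under_shifted_recursion_general
    (r : ℕ)
    (α β : ℕ → ℕ → ℤ)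
    (hrec : ∀ n,
      (∀ j, 1 ≤ j → j ≤ r →
        α (n + 1) j = α n j + β n j - (j : ℤ) ∧ β (n + 1) j = β n j) ∨
      (∀ j, 1 ≤ j → j ≤ r →
        α (n + 1) j = α n j ∧ β (n + 1) j = α n j + β n j - (j : ℤ)))
    (δ : ℕ → ℕ → ℕ → ℚ)
    (hδ : ∀ n i j, δ n i j =
      ((α n i : ℚ) / i - (α n j : ℚ) / j) * ((β n i : ℚ) / i - (β n j : ℚ) / j)) :
    ∀ n i j, 1 ≤ i → i ≤ r → 1 ≤ j → j ≤ r →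
      δ n i j ≤ δ (n + 1) i j ∧
      (δ n i j < 0 → 1 / (r : ℚ) ^ 4 ≤ δ (n + 1) i j - δ n i j) := by
  intro n i j hi hir hj hjr
  have hδ' : ∀ m, δ m i j = pairDelta i j (α m i) (α m j) (β m i) (β m j) := fun m => hδ m i j
  rw [hδ', hδ']
  rcases hrec n with h | h
  · rw [(h i hi hir).1, (h j hj hjr).1, (h i hi hir).2, (h j hj hjr).2]
    exact pairDelta.le_shear_and_gap _ _ _ _ hi hir hj hjr
  · rw [(h i hi hir).1, (h j hj hjr).1, (h i hi hir).2, (h j hj hjr).2,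
      pairDelta.comm (α n i), pairDelta.comm (α n i), add_comm (α n i), add_comm (α n j)]
    exact pairDelta.le_shear_and_gap _ _ _ _ hi hir hj hjr

/-- monotonicity of the products
`δ_{n,i,j} = (α_{n,i}/i − α_{n,j}/j)·(β_{n,i}/i − β_{n,j}/j)` under the
exponent recursion `(α,β) ↦ (α+β−j, β)` or `(α,β) ↦ (α, α+β−j)`. -/
theorem delta_monotone_under_shifted_recursion
    (r : ℕ) (hr : 1 ≤ r)
    (α β : ℕ → ℕ → ℤ)
    (hnonneg : ∀ n j, 1 ≤ j → j ≤ r → 0 ≤ α n j ∧ 0 ≤ β n j)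
    (hrec : ∀ n,
      (∀ j, 1 ≤ j → j ≤ r →
        α (n + 1) j = α n j + β n j - (j : ℤ) ∧ β (n + 1) j = β n j) ∨
      (∀ j, 1 ≤ j → j ≤ r →
        α (n + 1) j = α n j ∧ β (n + 1) j = α n j + β n j - (j : ℤ)))
    (δ : ℕ → ℕ → ℕ → ℚ)
    (hδ : ∀ n i j, δ n i j =
      ((α n i : ℚ) / i - (α n j : ℚ) / j) * ((β n i : ℚ) / i - (β n j : ℚ) / j)) :
    ∀ n i j, 1 ≤ i → i ≤ r → 1 ≤ j → j ≤ r →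
      δ n i j ≤ δ (n + 1) i j ∧
      (δ n i j < 0 → 1 / (r : ℚ) ^ 4 ≤ δ (n + 1) i j - δ n i j) :=
  delta_monotone_under_shifted_recursion_general r α β hrec δ hδ
end

section
/- Fix an integer r ≥ 1. Suppose that for all n ≥ 0 and all j with 1 ≤ j ≤ r we are given pairs of nonnegative integers (α_{n,j}, β_{n,j}) with α_{0,j} + β_{0,j} ≥ j, such that for each n, either (α_{n+1,j}, β_{n+1,j}) = (α_{n,j} + β_{n,j} − j, β_{n,j}) for all j, or (α_{n+1,j}, β_{n+1,j}) = (α_{n,j}, α_{n,j} + β_{n,j} − j) for all j. Then: (1) there exist n₀ ≥ 0 and an index i with 1 ≤ i ≤ r such that for all n ≥ n₀ and all 1 ≤ j ≤ r one has α_{n,i}/i ≤ α_{n,j}/j and β_{n,i}/i ≤ β_{n,j}/j; and (2) there exists n₁ ≥ n₀ such that {α_{n₁,i}/i} + {β_{n₁,i}/i} < 1, where {t} = t − ⌊t⌋ denotes the fractional part of a rational number t. -/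
/-!
For indices `j, k`, the pair `(j α_k - k α_j, j β_k - k β_j)` evolves by the Euclid-type shears
`(d, e) ↦ (d + e, e)` or `(d, d + e)`. These preserve the nonnegative quadrant, so a comparison
`(α_j/j, β_j/j) ≤ (α_k/k, β_k/k)` persists once it holds, and they shrink `|d| + |e|` at every
step before and after which `d` and `e` have strictly opposite signs, so it eventually holds one
way or the other. Hence the
normalized vectors eventually form a chain, with a least element `i`. Then
`{α/i} + {β/i} = (α % i + β % i) / i`, and while `α % i + β % i ≥ i` each step lowers this
integer by `i - β % i` (resp. `i - α % i`), which is positive.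
-/

open Filter

lemma exists_ge_of_measure_decreases {P : ℕ → Prop} (μ : ℕ → ℕ)
    (hμ : ∀ n, ¬ P n → μ (n + 1) < μ n) (n₀ : ℕ) : ∃ n, n₀ ≤ n ∧ P n := by
  induction hμ₀ : μ n₀ using Nat.strong_induction_on generalizing n₀ with
  | _ m ih =>
    by_cases hP : P n₀
    · exact ⟨n₀, le_rfl, hP⟩
    · obtain ⟨n, hn, hPn⟩ := ih _ (hμ₀ ▸ hμ n₀ hP) (n₀ + 1) rfl
      exact ⟨n, by omega, hPn⟩

lemma Int.add_sub_emod_of_le_emod_add_emod {a b m : ℤ} (hm : 0 < m) (h : m ≤ a % m + b % m) :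
    (a + b - m) % m = a % m + b % m - m := by
  have hdecomp : a + b - m = (a % m + b % m - m) + m * (a / m + b / m) := by
    linarith [Int.mul_ediv_add_emod a m, Int.mul_ediv_add_emod b m]
  rw [hdecomp, Int.add_mul_emod_self_left]
  exact Int.emod_eq_of_lt (by omega)
    (by linarith [Int.emod_lt_of_pos a hm, Int.emod_lt_of_pos b hm])

def IsShearOrbit (m : ℤ) (a b : ℕ → ℤ) : Prop :=
  ∀ n, (a (n + 1) = a n + b n - m ∧ b (n + 1) = b n) ∨
    (a (n + 1) = a n ∧ b (n + 1) = a n + b n - m)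

namespace IsShearOrbit

variable {m : ℤ} {a b : ℕ → ℤ}

lemma nonneg_of_le (h : IsShearOrbit 0 a b) {n₀ n : ℕ} (hn : n₀ ≤ n) (ha : 0 ≤ a n₀)
    (hb : 0 ≤ b n₀) : 0 ≤ a n ∧ 0 ≤ b n := by
  induction n, hn using Nat.le_induction with
  | base => exact ⟨ha, hb⟩
  | succ n _ ih => rcases h n with h' | h' <;> omega

lemma exists_sameSign (h : IsShearOrbit 0 a b) :
    ∃ N, (0 ≤ a N ∧ 0 ≤ b N) ∨ (a N ≤ 0 ∧ b N ≤ 0) := by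
  set SameSign : ℕ → Prop := fun N => (0 ≤ a N ∧ 0 ≤ b N) ∨ (a N ≤ 0 ∧ b N ≤ 0)
  -- `|a| + |b|` drops at a step only when the signs are strictly opposite before and after it.
  obtain ⟨N, -, hN⟩ := exists_ge_of_measure_decreases
    (P := fun N => SameSign N ∨ SameSign (N + 1)) (fun n => (a n).natAbs + (b n).natAbs)
    (fun n hn => by rcases h n with h' | h' <;> simp only [SameSign] at hn <;> omega) 0
  exact hN.elim (⟨N, ·⟩) (⟨N + 1, ·⟩)

lemma exists_emod_add_emod_lt (hm : 0 < m) (h : IsShearOrbit m a b) (n₀ : ℕ) :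
    ∃ n, n₀ ≤ n ∧ a n % m + b n % m < m := by
  refine exists_ge_of_measure_decreases (fun n => (a n % m + b n % m).toNat) (fun n hn => ?_) n₀
  have hle : m ≤ a n % m + b n % m := not_lt.1 hn
  have := Int.emod_lt_of_pos (a n) hm
  have := Int.emod_lt_of_pos (b n) hm
  have := Int.emod_nonneg (b n) hm.ne'
  rcases h n with ⟨ha, hb⟩ | ⟨ha, hb⟩ <;>
    simp only [ha, hb, Int.add_sub_emod_of_le_emod_add_emod hm hle] <;> omega

end IsShearOrbit

def IsShiftedRecursion (r : ℕ) (α β : ℕ → ℕ → ℤ) : Prop :=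
  ∀ n, (∀ j, 1 ≤ j → j ≤ r → α (n + 1) j = α n j + β n j - (j : ℤ) ∧ β (n + 1) j = β n j) ∨
    (∀ j, 1 ≤ j → j ≤ r → α (n + 1) j = α n j ∧ β (n + 1) j = α n j + β n j - (j : ℤ))

def NormalizedLE (α β : ℕ → ℕ → ℤ) (n j k : ℕ) : Prop :=
  (α n j : ℚ) / j ≤ (α n k : ℚ) / k ∧ (β n j : ℚ) / j ≤ (β n k : ℚ) / k

lemma normalizedLE_iff {α β : ℕ → ℕ → ℤ} {n j k : ℕ} (hj : 1 ≤ j) (hk : 1 ≤ k) :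
    NormalizedLE α β n j k ↔ 0 ≤ j * α n k - k * α n j ∧ 0 ≤ j * β n k - k * β n j := by
  have hj' : (0 : ℚ) < j := by exact_mod_cast hj
  have hk' : (0 : ℚ) < k := by exact_mod_cast hk
  simp only [NormalizedLE, div_le_div_iff₀ hj' hk', sub_nonneg, mul_comm _ (k : ℚ),
    mul_comm _ (j : ℚ)]
  norm_cast

lemma exists_normalizedLE_forall {α β : ℕ → ℕ → ℤ} {n : ℕ} {s : Finset ℕ} (hs : s.Nonempty)
    (htot : ∀ j ∈ s, ∀ k ∈ s, NormalizedLE α β n j k ∨ NormalizedLE α β n k j) :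
    ∃ i ∈ s, ∀ j ∈ s, NormalizedLE α β n i j := by
  -- The least element of a chain in `ℚ × ℚ` is the one with the least coordinate sum.
  obtain ⟨i, hi, hmin⟩ := s.exists_min_image (fun j => (α n j : ℚ) / j + β n j / j) hs
  refine ⟨i, hi, fun j hj => ?_⟩
  rcases htot i hi j hj with h | ⟨hα, hβ⟩
  · exact h
  · have := hmin j hj
    exact ⟨by linarith, by linarith⟩

namespace IsShiftedRecursion

variable {r : ℕ} {α β : ℕ → ℕ → ℤ}

lemma isShearOrbit (hrec : IsShiftedRecursion r α β) {j : ℕ} (hj : 1 ≤ j) (hjr : j ≤ r) :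
    IsShearOrbit j (α · j) (β · j) := fun n => by
  rcases hrec n with h | h
  · exact .inl (h j hj hjr)
  · exact .inr (h j hj hjr)

lemma isShearOrbit_cross (hrec : IsShiftedRecursion r α β) {j k : ℕ} (hj : 1 ≤ j) (hjr : j ≤ r)
    (hk : 1 ≤ k) (hkr : k ≤ r) :
    IsShearOrbit 0 (fun n => j * α n k - k * α n j) (fun n => j * β n k - k * β n j) := fun n => by
  rcases hrec n with h | h
  · obtain ⟨haj, hbj⟩ := h j hj hjr
    obtain ⟨hak, hbk⟩ := h k hk hkr
    exact .inl ⟨by linear_combination (j : ℤ) * hak - k * haj,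
      by linear_combination (j : ℤ) * hbk - k * hbj⟩
  · obtain ⟨haj, hbj⟩ := h j hj hjr
    obtain ⟨hak, hbk⟩ := h k hk hkr
    exact .inr ⟨by linear_combination (j : ℤ) * hak - k * haj,
      by linear_combination (j : ℤ) * hbk - k * hbj⟩

lemma normalizedLE_mono (hrec : IsShiftedRecursion r α β) {j k n₀ n : ℕ} (hj : 1 ≤ j)
    (hjr : j ≤ r) (hk : 1 ≤ k) (hkr : k ≤ r) (hn : n₀ ≤ n) (h : NormalizedLE α β n₀ j k) :
    NormalizedLE α β n j k := by
  rw [normalizedLE_iff hj hk] at h ⊢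
  exact (hrec.isShearOrbit_cross hj hjr hk hkr).nonneg_of_le hn h.1 h.2

lemma eventually_normalizedLE_total (hrec : IsShiftedRecursion r α β) :
    ∀ᶠ n in atTop, ∀ j ∈ Finset.Icc 1 r, ∀ k ∈ Finset.Icc 1 r,
      NormalizedLE α β n j k ∨ NormalizedLE α β n k j := by
  refine (Finset.eventually_all _).2 fun j hj => (Finset.eventually_all _).2 fun k hk => ?_
  obtain ⟨hj, hjr⟩ := Finset.mem_Icc.1 hj
  obtain ⟨hk, hkr⟩ := Finset.mem_Icc.1 hk
  obtain ⟨N, hN⟩ := (hrec.isShearOrbit_cross hj hjr hk hkr).exists_sameSign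
  have hN : NormalizedLE α β N j k ∨ NormalizedLE α β N k j := by
    rw [normalizedLE_iff hj hk, normalizedLE_iff hk hj]
    omega
  exact eventually_atTop.2 ⟨N, fun n hn =>
    hN.imp (hrec.normalizedLE_mono hj hjr hk hkr hn) (hrec.normalizedLE_mono hk hkr hj hjr hn)⟩

end IsShiftedRecursion

theorem exponents_stabilize_under_shifted_recursion_general
    (r : ℕ) (hr : 1 ≤ r)
    (α β : ℕ → ℕ → ℤ)
    (hrec : ∀ n,
      (∀ j, 1 ≤ j → j ≤ r →
        α (n + 1) j = α n j + β n j - (j : ℤ) ∧ β (n + 1) j = β n j) ∨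
      (∀ j, 1 ≤ j → j ≤ r →
        α (n + 1) j = α n j ∧ β (n + 1) j = α n j + β n j - (j : ℤ))) :
    ∃ n₀ i, 1 ≤ i ∧ i ≤ r ∧
      (∀ n, n₀ ≤ n → ∀ j, 1 ≤ j → j ≤ r →
        (α n i : ℚ) / i ≤ (α n j : ℚ) / j ∧ (β n i : ℚ) / i ≤ (β n j : ℚ) / j) ∧
      ∃ n₁, n₀ ≤ n₁ ∧
        Int.fract ((α n₁ i : ℚ) / i) + Int.fract ((β n₁ i : ℚ) / i) < 1 := by
  have hrec : IsShiftedRecursion r α β := hrec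
  obtain ⟨n₀, htot⟩ := hrec.eventually_normalizedLE_total.exists
  obtain ⟨i, hi, hmin⟩ := exists_normalizedLE_forall ⟨1, Finset.mem_Icc.2 ⟨le_rfl, hr⟩⟩ htot
  obtain ⟨hi, hir⟩ := Finset.mem_Icc.1 hi
  obtain ⟨n₁, hn₁, hlt⟩ :=
    (hrec.isShearOrbit hi hir).exists_emod_add_emod_lt (by exact_mod_cast hi) n₀
  refine ⟨n₀, i, hi, hir, fun n hn j hj hjr =>
    hrec.normalizedLE_mono hi hir hj hjr hn (hmin j (Finset.mem_Icc.2 ⟨hj, hjr⟩)), n₁, hn₁, ?_⟩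
  rw [Int.fract_div_intCast_eq_div_intCast_mod, Int.fract_div_intCast_eq_div_intCast_mod,
    ← add_div, div_lt_one (by exact_mod_cast hi)]
  exact_mod_cast hlt

/-- stabilization of the normalized exponent vectors under the
exponent recursion `(α,β) ↦ (α+β−j, β)` or `(α,β) ↦ (α, α+β−j)`, and smallness
of the fractional parts at some later stage. -/
theorem exponents_stabilize_under_shifted_recursion
    (r : ℕ) (hr : 1 ≤ r)
    (α β : ℕ → ℕ → ℤ)
    (hnonneg : ∀ n j, 1 ≤ j → j ≤ r → 0 ≤ α n j ∧ 0 ≤ β n j)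
    (hinit : ∀ j, 1 ≤ j → j ≤ r → (j : ℤ) ≤ α 0 j + β 0 j)
    (hrec : ∀ n,
      (∀ j, 1 ≤ j → j ≤ r →
        α (n + 1) j = α n j + β n j - (j : ℤ) ∧ β (n + 1) j = β n j) ∨
      (∀ j, 1 ≤ j → j ≤ r →
        α (n + 1) j = α n j ∧ β (n + 1) j = α n j + β n j - (j : ℤ))) :
    ∃ n₀ i, 1 ≤ i ∧ i ≤ r ∧
      (∀ n, n₀ ≤ n → ∀ j, 1 ≤ j → j ≤ r →
        (α n i : ℚ) / i ≤ (α n j : ℚ) / j ∧ (β n i : ℚ) / i ≤ (β n j : ℚ) / j) ∧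
      ∃ n₁, n₀ ≤ n₁ ∧
        Int.fract ((α n₁ i : ℚ) / i) + Int.fract ((β n₁ i : ℚ) / i) < 1 :=
  exponents_stabilize_under_shifted_recursion_general r hr α β hrec
end

section
/- Let k be an algebraically closed field of characteristic zero, let u and v lie in the maximal ideal of k[[x,y]], and let φ be a quadratic substitution of k[[x,y]]. Then u and v are analytically independent if and only if φ(u) and φ(v) are analytically independent. -/
/-!
A continuous substitution `φ` commutes with evaluation, `φ (F(u,v)) = F(φ u, φ v)`: in each degree
both sides only involve a finite truncation of `F`, since `u ^ a * v ^ b` has order at least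
`a + b`. Hence a relation between `u` and `v` is carried to one between `φ u` and `φ v`, and
conversely as soon as `φ` is injective. Injectivity of a quadratic substitution is read off
coefficients: `x ^ a * y ^ b ↦ x ^ a * y ^ (a + b)` is injective on monomials, and
`x ^ a * y ^ b ↦ x ^ (a + b) * (y + c) ^ b` is unitriangular on each homogeneous component.
-/

noncomputable section

/-- Substitution of the pair `(u, v)` into a two-variable power series `F`:
the coefficient of `F(u,v)` at a monomial `d` only involves the finitely many monomials
of `F` of total degree at most `|d|`, since `u` and `v` have zero constant term.  This
realizes the value `F(u,v)` for `u, v` in the maximal ideal of `k[[x,y]]`. -/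
def psEval {k : Type*} [Field k] (u v : MvPowerSeries (Fin 2) k)
    (F : MvPowerSeries (Fin 2) k) : MvPowerSeries (Fin 2) k :=
  fun d => ∑ e ∈ Finset.range (d 0 + d 1 + 1) ×ˢ Finset.range (d 0 + d 1 + 1),
    MvPowerSeries.coeff (R := k) (Finsupp.single 0 e.1 + Finsupp.single 1 e.2) F *
      MvPowerSeries.coeff (R := k) d (u ^ e.1 * v ^ e.2)

/-- `u` and `v` are analytically dependent if `F(u,v) = 0` for some nonzero two-variable
formal power series `F`. -/
def AnalyticallyDependent {k : Type*} [Field k] (u v : MvPowerSeries (Fin 2) k) : Prop :=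
  ∃ F : MvPowerSeries (Fin 2) k, F ≠ 0 ∧ psEval u v F = 0

/-- A `k`-algebra endomorphism of `k[[x,y]]` is coefficientwise continuous if the
coefficient of `φ F` at `d` depends only on the coefficients of `F` in total degree at
most `|d|`.  The substitution homomorphisms of power series rings have this property,
and such a homomorphism is determined by its values on `x` and `y`. -/
def CoeffCont {k : Type*} [Field k]
    (φ : MvPowerSeries (Fin 2) k →ₐ[k] MvPowerSeries (Fin 2) k) : Prop :=
  ∀ (d : Fin 2 →₀ ℕ) (F G : MvPowerSeries (Fin 2) k),
    (∀ e : Fin 2 →₀ ℕ, e 0 + e 1 ≤ d 0 + d 1 →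
      MvPowerSeries.coeff (R := k) e F = MvPowerSeries.coeff (R := k) e G) →
    MvPowerSeries.coeff (R := k) d (φ F) = MvPowerSeries.coeff (R := k) d (φ G)

/-- A quadratic substitution of `k[[x,y]]`: the (continuous) `k`-algebra homomorphism
determined by `x ↦ x, y ↦ x(y + c)` for some `c ∈ k`, or by `x ↦ xy, y ↦ y`. -/
def IsQuadSubst {k : Type*} [Field k]
    (φ : MvPowerSeries (Fin 2) k →ₐ[k] MvPowerSeries (Fin 2) k) : Prop :=
  CoeffCont φ ∧
    ((∃ c : k, φ (MvPowerSeries.X 0) = MvPowerSeries.X 0 ∧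
        φ (MvPowerSeries.X 1) =
          MvPowerSeries.X 0 * (MvPowerSeries.X 1 + MvPowerSeries.C (σ := Fin 2) (R := k) c)) ∨
      (φ (MvPowerSeries.X 0) = MvPowerSeries.X 0 * MvPowerSeries.X 1 ∧
        φ (MvPowerSeries.X 1) = MvPowerSeries.X 1))

open MvPowerSeries Finset

section Semiring

variable {R : Type*} [CommSemiring R]

abbrev bideg (a b : ℕ) : Fin 2 →₀ ℕ := Finsupp.single 0 a + Finsupp.single 1 b

@[simp] lemma bideg_apply_zero (a b : ℕ) : bideg a b 0 = a := by simp

@[simp] lemma bideg_apply_one (a b : ℕ) : bideg a b 1 = b := by simp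

lemma bideg_apply_self (d : Fin 2 →₀ ℕ) : bideg (d 0) (d 1) = d := by
  ext i; fin_cases i <;> simp

lemma bideg_inj {a b a' b' : ℕ} : bideg a b = bideg a' b' ↔ a = a' ∧ b = b' := by
  refine ⟨fun h => ⟨by simpa using congr($h 0), by simpa using congr($h 1)⟩, ?_⟩
  rintro ⟨rfl, rfl⟩
  rfl

lemma X_pow_mul_X_pow (a b : ℕ) :
    (X 0 : MvPowerSeries (Fin 2) R) ^ a * X 1 ^ b = monomial (bideg a b) 1 := by
  rw [X_pow_eq, X_pow_eq, monomial_mul_monomial, one_mul]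

lemma coeff_pow_mul_pow_eq_zero {u v : MvPowerSeries (Fin 2) R}
    (hu : constantCoeff u = 0) (hv : constantCoeff v = 0)
    {a b : ℕ} {d : Fin 2 →₀ ℕ} (h : d 0 + d 1 < a + b) :
    coeff d (u ^ a * v ^ b) = 0 := by
  apply coeff_of_lt_order
  calc ((d.degree : ℕ) : ℕ∞) = ((d 0 + d 1 : ℕ) : ℕ∞) := by
        rw [Finsupp.degree_eq_sum, Fin.sum_univ_two]
    _ < a + b := by exact_mod_cast h
    _ ≤ (u ^ a).order + (v ^ b).order := add_le_add
        (le_order_pow_of_constantCoeff_eq_zero a hu) (le_order_pow_of_constantCoeff_eq_zero b hv)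
    _ ≤ (u ^ a * v ^ b).order := le_order_mul

lemma coeff_X_pow_mul_X_mul_X_add_C_pow (c : R) (n j a b : ℕ) :
    coeff (bideg n j) ((X 0 : MvPowerSeries (Fin 2) R) ^ a * (X 0 * (X 1 + C c)) ^ b) =
      if a + b = n ∧ j ≤ b then c ^ (b - j) * b.choose j else 0 := by
  have hexpand : (X 0 : MvPowerSeries (Fin 2) R) ^ a * (X 0 * (X 1 + C c)) ^ b =
      ∑ t ∈ range (b + 1), monomial (bideg (a + b) t) (c ^ (b - t) * b.choose t) := by
    rw [mul_pow, ← mul_assoc, ← pow_add, add_pow, mul_sum]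
    refine sum_congr rfl fun t _ => ?_
    rw [← map_pow, ← map_natCast (C (σ := Fin 2) (R := R)) (b.choose t), X_pow_eq, X_pow_eq,
      ← monomial_zero_eq_C_apply, ← monomial_zero_eq_C_apply, monomial_mul_monomial,
      monomial_mul_monomial, monomial_mul_monomial, add_zero, add_zero, one_mul, one_mul]
  simp only [hexpand, map_sum, coeff_monomial, bideg_inj]
  split_ifs with h
  · rw [sum_eq_single j]
    · rw [if_pos ⟨h.1.symm, rfl⟩]
    · intro t _ hne
      rw [if_neg fun h' => hne h'.2.symm]
    · intro hj
      exact absurd (mem_range.mpr (by omega)) hj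
  · refine sum_eq_zero fun t ht => if_neg ?_
    rintro ⟨h1, rfl⟩
    exact h ⟨h1.symm, by simpa [Nat.lt_succ_iff] using ht⟩

def boxEval {A : Type*} [Semiring A] [Algebra R A] (u v : A) (N : ℕ)
    (F : MvPowerSeries (Fin 2) R) : A :=
  ∑ e ∈ range (N + 1) ×ˢ range (N + 1), coeff (bideg e.1 e.2) F • (u ^ e.1 * v ^ e.2)

lemma map_boxEval {A B : Type*} [Semiring A] [Algebra R A] [Semiring B] [Algebra R B]
    (φ : A →ₐ[R] B) (u v : A) (N : ℕ) (F : MvPowerSeries (Fin 2) R) :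
    φ (boxEval u v N F) = boxEval (φ u) (φ v) N F := by
  simp only [boxEval, map_sum, map_smul, map_mul, map_pow]

end Semiring

section Field

variable {k : Type*} [Field k]

lemma constantCoeff_eq_zero_of_mem_maximalIdeal {σ : Type*} {u : MvPowerSeries σ k}
    (hu : u ∈ IsLocalRing.maximalIdeal (MvPowerSeries σ k)) : constantCoeff u = 0 := by
  rwa [IsLocalRing.mem_maximalIdeal, mem_nonunits_iff, isUnit_iff_constantCoeff,
    isUnit_iff_ne_zero, not_not] at hu

lemma coeff_psEval (u v F : MvPowerSeries (Fin 2) k) (d : Fin 2 →₀ ℕ) :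
    coeff d (psEval u v F) =
      ∑ e ∈ range (d 0 + d 1 + 1) ×ˢ range (d 0 + d 1 + 1),
        coeff (bideg e.1 e.2) F * coeff d (u ^ e.1 * v ^ e.2) := rfl

lemma coeff_psEval_eq_coeff_boxEval {u v : MvPowerSeries (Fin 2) k}
    (hu : constantCoeff u = 0) (hv : constantCoeff v = 0)
    (F : MvPowerSeries (Fin 2) k) {N : ℕ} {d : Fin 2 →₀ ℕ} (hd : d 0 + d 1 ≤ N) :
    coeff d (psEval u v F) = coeff d (boxEval u v N F) := by
  simp only [coeff_psEval, boxEval, map_sum, map_smul, smul_eq_mul]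
  apply sum_subset
  · intro e he
    simp only [mem_product, mem_range] at he ⊢
    omega
  · intro e _ he
    simp only [mem_product, mem_range, not_and_or, not_lt] at he
    rw [coeff_pow_mul_pow_eq_zero hu hv (by omega), mul_zero]

lemma psEval_X_X (F : MvPowerSeries (Fin 2) k) : psEval (X 0) (X 1) F = F := by
  ext d
  rw [coeff_psEval, sum_eq_single (d 0, d 1)]
  · rw [X_pow_mul_X_pow, coeff_monomial, if_pos (bideg_apply_self d).symm, mul_one,
      bideg_apply_self]
  · rintro ⟨a, b⟩ _ hne
    rw [X_pow_mul_X_pow, coeff_monomial, if_neg, mul_zero]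
    rw [← bideg_apply_self d, bideg_inj]
    rintro ⟨rfl, rfl⟩
    exact hne rfl
  · simp only [mem_product, mem_range]
    omega

lemma coeff_psEval_X_mul_X_X (F : MvPowerSeries (Fin 2) k) (a b : ℕ) :
    coeff (bideg a (a + b)) (psEval (X 0 * X 1) (X 1) F) = coeff (bideg a b) F := by
  have hmon : ∀ p q : ℕ, ((X 0 * X 1 : MvPowerSeries (Fin 2) k) ^ p * X 1 ^ q) =
      monomial (bideg p (p + q)) 1 := fun p q => by
    rw [mul_pow, mul_assoc, ← pow_add, X_pow_mul_X_pow]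
  rw [coeff_psEval, sum_eq_single (a, b)]
  · rw [hmon, coeff_monomial, if_pos rfl, mul_one]
  · rintro ⟨p, q⟩ _ hne
    rw [hmon, coeff_monomial, if_neg, mul_zero]
    rw [bideg_inj]
    rintro ⟨rfl, h⟩
    exact hne (Prod.ext rfl (by simp only at h ⊢; omega))
  · simp only [bideg_apply_zero, bideg_apply_one, mem_product, mem_range]
    omega

lemma eq_zero_of_psEval_X_mul_X_X_eq_zero {F : MvPowerSeries (Fin 2) k}
    (hF : psEval (X 0 * X 1) (X 1) F = 0) : F = 0 := by
  ext d
  rw [← bideg_apply_self d, ← coeff_psEval_X_mul_X_X, hF, map_zero, map_zero]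

lemma coeff_psEval_X_X_mul_X_add_C (c : k) {F : MvPowerSeries (Fin 2) k} {a b : ℕ}
    (hF : ∀ a' b', a' + b' = a + b → b < b' → coeff (bideg a' b') F = 0) :
    coeff (bideg (a + b) b) (psEval (X 0) (X 0 * (X 1 + C c)) F) = coeff (bideg a b) F := by
  simp only [coeff_psEval, coeff_X_pow_mul_X_mul_X_add_C_pow, bideg_apply_zero,
    bideg_apply_one]
  rw [sum_eq_single (a, b)]
  · simp
  · rintro ⟨a', b'⟩ _ hne
    split_ifs with h
    · rw [hF a' b' h.1 (lt_of_le_of_ne h.2 fun hb => hne (Prod.ext (by omega) hb.symm)),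
        zero_mul]
    · rw [mul_zero]
  · simp only [mem_product, mem_range]
    omega

lemma eq_zero_of_psEval_X_X_mul_X_add_C_eq_zero (c : k) {F : MvPowerSeries (Fin 2) k}
    (hF : psEval (X 0) (X 0 * (X 1 + C c)) F = 0) : F = 0 := by
  have key : ∀ a b, coeff (bideg a b) F = 0 := by
    intro a
    induction a using Nat.strong_induction_on with
    | _ a ih =>
      intro b
      rw [← coeff_psEval_X_X_mul_X_add_C c fun a' b' h hb => ih a' (by omega) b', hF, map_zero]
  ext d
  rw [← bideg_apply_self d, key, map_zero]

variable {φ : MvPowerSeries (Fin 2) k →ₐ[k] MvPowerSeries (Fin 2) k}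

namespace CoeffCont

lemma constantCoeff_eq_zero (hφ : CoeffCont φ) {u : MvPowerSeries (Fin 2) k}
    (hu : constantCoeff u = 0) : constantCoeff (φ u) = 0 := by
  rw [← coeff_zero_eq_constantCoeff_apply, hφ 0 u 0, map_zero, map_zero]
  intro e he
  obtain rfl : e = 0 := by
    rw [← bideg_apply_self e]
    simp only [Finsupp.coe_zero, Pi.zero_apply] at he
    rw [show e 0 = 0 by omega, show e 1 = 0 by omega]
    simp
  rw [coeff_zero_eq_constantCoeff_apply, hu, map_zero]

lemma map_psEval (hφ : CoeffCont φ) {u v : MvPowerSeries (Fin 2) k}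
    (hu : constantCoeff u = 0) (hv : constantCoeff v = 0) (F : MvPowerSeries (Fin 2) k) :
    φ (psEval u v F) = psEval (φ u) (φ v) F := by
  ext d
  calc coeff d (φ (psEval u v F)) = coeff d (φ (boxEval u v (d 0 + d 1) F)) :=
        hφ d _ _ fun e he => coeff_psEval_eq_coeff_boxEval hu hv F he
    _ = coeff d (boxEval (φ u) (φ v) (d 0 + d 1) F) := by rw [map_boxEval]
    _ = coeff d (psEval (φ u) (φ v) F) :=
        (coeff_psEval_eq_coeff_boxEval (hφ.constantCoeff_eq_zero hu)
          (hφ.constantCoeff_eq_zero hv) F le_rfl).symm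

lemma eq_psEval (hφ : CoeffCont φ) (F : MvPowerSeries (Fin 2) k) :
    φ F = psEval (φ (X 0)) (φ (X 1)) F := by
  conv_lhs => rw [← psEval_X_X F]
  exact hφ.map_psEval (constantCoeff_X 0) (constantCoeff_X 1) F

lemma analyticallyDependent_map_iff (hφ : CoeffCont φ) (hinj : Function.Injective φ)
    {u v : MvPowerSeries (Fin 2) k} (hu : constantCoeff u = 0) (hv : constantCoeff v = 0) :
    AnalyticallyDependent (φ u) (φ v) ↔ AnalyticallyDependent u v := by
  simp only [AnalyticallyDependent, ← hφ.map_psEval hu hv, map_eq_zero_iff φ hinj]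

end CoeffCont

lemma IsQuadSubst.injective (hφ : IsQuadSubst φ) : Function.Injective φ := by
  obtain ⟨hφc, ⟨c, h0, h1⟩ | ⟨h0, h1⟩⟩ := hφ
  all_goals refine (injective_iff_map_eq_zero φ).mpr fun F hF => ?_
  · rw [hφc.eq_psEval, h0, h1] at hF
    exact eq_zero_of_psEval_X_X_mul_X_add_C_eq_zero c hF
  · rw [hφc.eq_psEval, h0, h1] at hF
    exact eq_zero_of_psEval_X_mul_X_X_eq_zero hF

end Field

theorem analyticallyIndependent_iff_of_quadSubst_general
    (k : Type*) [Field k]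
    (u v : MvPowerSeries (Fin 2) k)
    (hu : u ∈ IsLocalRing.maximalIdeal (MvPowerSeries (Fin 2) k))
    (hv : v ∈ IsLocalRing.maximalIdeal (MvPowerSeries (Fin 2) k))
    (φ : MvPowerSeries (Fin 2) k →ₐ[k] MvPowerSeries (Fin 2) k)
    (hφ : IsQuadSubst φ) :
    (¬ AnalyticallyDependent u v) ↔ ¬ AnalyticallyDependent (φ u) (φ v) :=
  not_congr (hφ.1.analyticallyDependent_map_iff hφ.injective
    (constantCoeff_eq_zero_of_mem_maximalIdeal hu)
    (constantCoeff_eq_zero_of_mem_maximalIdeal hv)).symm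

/-- analytic independence is preserved (in both directions) by a quadratic
substitution of `k[[x,y]]`. -/
theorem analyticallyIndependent_iff_of_quadSubst
    (k : Type*) [Field k] [IsAlgClosed k] [CharZero k]
    (u v : MvPowerSeries (Fin 2) k)
    (hu : u ∈ IsLocalRing.maximalIdeal (MvPowerSeries (Fin 2) k))
    (hv : v ∈ IsLocalRing.maximalIdeal (MvPowerSeries (Fin 2) k))
    (φ : MvPowerSeries (Fin 2) k →ₐ[k] MvPowerSeries (Fin 2) k)
    (hφ : IsQuadSubst φ) :
    (¬ AnalyticallyDependent u v) ↔ ¬ AnalyticallyDependent (φ u) (φ v) :=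
  analyticallyIndependent_iff_of_quadSubst_general k u v hu hv φ hφ

end
end

section
/- Let k be a field of characteristic zero, let α ∈ k be nonzero, let λ ∈ ℚ, let r ≥ 0 be an integer, and let g ∈ k[t] be a nonzero polynomial of degree at most r. Let B(y) = Σ_{i≥0} C(λ, i)·α^{−i}·y^i ∈ k[[y]], where C(λ, i) = λ(λ−1)⋯(λ−i+1)/i! ∈ ℚ, so that B is the formal binomial expansion of (1 + y/α)^λ. If the product B(y)·g(y + α) ∈ k[[y]] is congruent to a constant modulo y^{r+2}, then −λ is an integer with 0 ≤ −λ ≤ r, and g(t) = e·t^{−λ} for some nonzero e ∈ k. -/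
/-!
Put `G(y) = g(y + α)` and `B' = (1 + y/α)^(-λ)`, so that `B' B = 1`. Multiplying
`B G ≡ c mod y^(r+2)` by `B'` gives `G = c · (B' mod y^(r+2))`, and `c ≠ 0` because `g ≠ 0`.
As `deg G ≤ r`, the coefficient `C(-λ, r+1) α^(-(r+1))` of `B'` must vanish, which forces
`-λ = n ∈ {0, …, r}`. Then `B' = (1 + y/α)^n` is a polynomial of degree `≤ r`, so
`G = c (1 + y/α)^n` and `g(t) = G(t - α) = c α^(-n) t^n`.
-/

noncomputable section

/-- The generalized binomial coefficient `C(λ, i) = λ(λ−1)⋯(λ−i+1)/i!` in `ℚ`. -/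
def qBinom (l : ℚ) (i : ℕ) : ℚ := (∏ j ∈ Finset.range i, (l - (j : ℚ))) / (Nat.factorial i)

open PowerSeries
open scoped Polynomial

lemma qBinom_eq_choose (l : ℚ) (i : ℕ) : qBinom l i = Ring.choose l i := by
  rw [Ring.choose_eq_smul, ← Polynomial.aeval_eq_smeval, Polynomial.aeval_def,
    Polynomial.eval₂_eq_eval_map, descPochhammer_map, descPochhammer_eval_eq_prod_range, qBinom,
    smul_eq_mul, div_eq_inv_mul]

lemma exists_natCast_lt_of_qBinom_eq_zero {l : ℚ} {n : ℕ} (h : qBinom l n = 0) :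
    ∃ m < n, l = m := by
  rw [qBinom, div_eq_zero_iff, Nat.cast_eq_zero, or_iff_left (Nat.factorial_ne_zero n),
    Finset.prod_eq_zero_iff] at h
  obtain ⟨m, hm, hlm⟩ := h
  exact ⟨m, Finset.mem_range.mp hm, sub_eq_zero.mp hlm⟩

lemma rescale_binomialSeries_eq_mk_qBinom {k : Type*} [Field k] [CharZero k] (a : k) (l : ℚ) :
    rescale a (binomialSeries k l) = mk fun i => (qBinom l i : k) * a ^ i := by
  ext i
  rw [coeff_rescale, binomialSeries_coeff, coeff_mk, qBinom_eq_choose, Rat.smul_one_eq_cast,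
    mul_comm]

section BinomialSeries

variable {A : Type*} [CommRing A] [Algebra ℚ A]

lemma rescale_binomialSeries_neg_mul_self (a : A) (l : ℚ) :
    rescale a (binomialSeries A (-l)) * rescale a (binomialSeries A l) = 1 := by
  rw [← map_mul, ← binomialSeries_add, neg_add_cancel, binomialSeries_zero, map_one]

lemma trunc_rescale_binomialSeries_natCast (a : A) {n N : ℕ} (hn : n < N) :
    trunc N (rescale a (binomialSeries A (n : ℚ))) = (1 + Polynomial.C a * Polynomial.X) ^ n := by
  have hdeg : ((1 + Polynomial.C a * Polynomial.X) ^ n).natDegree ≤ n := by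
    simpa only [add_comm, ← Polynomial.C_1, mul_one] using
      Polynomial.natDegree_pow_le_of_le n (Polynomial.natDegree_linear_le (a := a) (b := 1))
  have hcoe : ((1 + C a * X) ^ n : A⟦X⟧) = ((1 + Polynomial.C a * Polynomial.X) ^ n : A[X]) := by
    simp
  rw [binomialSeries_nat, map_pow, map_add, map_one, rescale_X, hcoe,
    trunc_coe_eq_self (by omega)]

end BinomialSeries

lemma trunc_succ_eq_C_of_coeff_eq_zero {R : Type*} [CommRing R] {f : R⟦X⟧} {N : ℕ}
    (hf : ∀ i, 1 ≤ i → i ≤ N → coeff i f = 0) : trunc (N + 1) f = Polynomial.C (coeff 0 f) := by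
  ext i
  rw [coeff_trunc, Polynomial.coeff_C]
  split_ifs with hi h0 h0
  · rw [h0]
  · exact hf i (by omega) (by omega)
  · omega
  · rfl

lemma eq_C_mul_trunc_of_trunc_mul_eq_C {R : Type*} [CommRing R] {B B' : R⟦X⟧}
    (hBB' : B' * B = 1) {G : R[X]} {N : ℕ} (hG : G.natDegree < N) {c : R}
    (h : trunc N (B * (G : R⟦X⟧)) = Polynomial.C c) : G = Polynomial.C c * trunc N B' :=
  calc G = trunc N G := (trunc_coe_eq_self hG).symm
    _ = trunc N (B' * (B * (G : R⟦X⟧))) := by rw [← mul_assoc, hBB', one_mul]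
    _ = trunc N (C c * B') := by rw [← trunc_mul_trunc, h, Polynomial.coe_C, mul_comm]
    _ = Polynomial.C c * trunc N B' := trunc_C_mul N c B'

lemma aeval_X_add_C_eq_coe_comp {R : Type*} [CommRing R] (a : R) (g : R[X]) :
    Polynomial.aeval (X + C a) g = ((g.comp (Polynomial.X + Polynomial.C a) : R[X]) : R⟦X⟧) := by
  have hXa : Polynomial.coeToPowerSeries.algHom R (Polynomial.X + Polynomial.C a) = X + C a := by
    simp [Polynomial.coeToPowerSeries.algHom_apply]
  rw [← hXa, Polynomial.aeval_algHom_apply, Polynomial.comp_eq_aeval]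
  rfl

lemma C_mul_one_add_C_inv_mul_X_pow_comp_X_sub_C {k : Type*} [Field k] {α : k} (hα : α ≠ 0)
    (c : k) (n : ℕ) :
    (Polynomial.C c * (1 + Polynomial.C α⁻¹ * Polynomial.X) ^ n).comp
      (Polynomial.X - Polynomial.C α) = Polynomial.C (c * α⁻¹ ^ n) * Polynomial.X ^ n := by
  have hlin : (1 + Polynomial.C α⁻¹ * Polynomial.X).comp (Polynomial.X - Polynomial.C α)
      = Polynomial.C α⁻¹ * Polynomial.X := by
    simp only [Polynomial.add_comp, Polynomial.one_comp, Polynomial.mul_comp, Polynomial.C_comp,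
      Polynomial.X_comp, mul_sub, ← Polynomial.C_mul, inv_mul_cancel₀ hα, Polynomial.C_1]
    ring
  rw [Polynomial.mul_comp, Polynomial.C_comp, Polynomial.pow_comp, hlin, mul_pow,
    ← Polynomial.C_pow, Polynomial.C_mul, mul_assoc]

/-- if the formal binomial series `B(y) = (1 + y/α)^λ` multiplied by
`g(y + α)` is congruent to a constant modulo `y^{r+2}`, where `g` is a nonzero polynomial
of degree at most `r`, then `−λ ∈ {0, 1, …, r}` and `g(t) = e t^{−λ}` for some `e ≠ 0`. -/
theorem binomial_series_times_polynomial_constant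
    (k : Type*) [Field k] [CharZero k]
    (α : k) (hα : α ≠ 0) (l : ℚ) (r : ℕ)
    (g : Polynomial k) (hg : g ≠ 0) (hdeg : g.natDegree ≤ r)
    (B : PowerSeries k)
    (hB : B = PowerSeries.mk fun i => ((qBinom l i : ℚ) : k) * α⁻¹ ^ i)
    (hconst : ∀ i : ℕ, 1 ≤ i → i ≤ r + 1 →
      PowerSeries.coeff (R := k) i
        (B * Polynomial.aeval (PowerSeries.X + PowerSeries.C (R := k) α) g) = 0) :
    ∃ n : ℕ, l = -(n : ℚ) ∧ n ≤ r ∧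
      ∃ e : k, e ≠ 0 ∧ g = Polynomial.C e * Polynomial.X ^ n := by
  set G := g.comp (Polynomial.X + Polynomial.C α)
  have hg_eq : g = G.comp (Polynomial.X - Polynomial.C α) := by
    simp [G, Polynomial.comp_assoc]
  have hGdeg : G.natDegree ≤ r := by
    simpa only [G, Polynomial.natDegree_comp, Polynomial.natDegree_X_add_C, mul_one] using hdeg
  rw [← rescale_binomialSeries_eq_mk_qBinom] at hB
  set c := coeff 0 (B * (G : k⟦X⟧))
  have hGc : G = Polynomial.C c * trunc (r + 2) (rescale α⁻¹ (binomialSeries k (-l))) := by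
    refine eq_C_mul_trunc_of_trunc_mul_eq_C (hB ▸ rescale_binomialSeries_neg_mul_self α⁻¹ l)
      (by omega) (trunc_succ_eq_C_of_coeff_eq_zero ?_)
    simpa only [aeval_X_add_C_eq_coe_comp] using hconst
  have hc : c ≠ 0 := by
    rintro hc
    apply hg
    rw [hg_eq, hGc, hc, map_zero, zero_mul, Polynomial.zero_comp]
  have hchoose : qBinom (-l) (r + 1) = 0 := by
    have h := congrArg (Polynomial.coeff · (r + 1)) hGc
    rw [qBinom_eq_choose]
    simpa [Polynomial.coeff_eq_zero_of_natDegree_lt (show G.natDegree < r + 1 by omega),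
      coeff_trunc, coeff_rescale, hc, hα] using h
  obtain ⟨n, hn, hln⟩ := exists_natCast_lt_of_qBinom_eq_zero hchoose
  refine ⟨n, by linarith, by omega, c * α⁻¹ ^ n, by simp [hc, hα], ?_⟩
  rw [hg_eq, hGc, hln, trunc_rescale_binomialSeries_natCast _ (by omega),
    C_mul_one_add_C_inv_mul_X_pow_comp_X_sub_C hα]

end
end

section
/- Let k be a field of characteristic zero and r ≥ 2 an integer. Let F ∈ k[y][[x,z]] be a formal power series in x and z whose coefficients are polynomials in y over k, and suppose that the coefficient of x^i y^0 z^0 in F is zero for every i ≥ 0. Suppose that there are infinitely many α ∈ k such that, denoting by F_α the series obtained from F by substituting y + α for y, the coefficient of x^i y^j z^k in F_α is zero whenever j + k > 0 and i + j + k < r. Write F = a_r + a_{r−1}·z + ⋯ + a_1·z^{r−1} + G·z^r, where a_i ∈ k[y][[x]] is the coefficient of z^{r−i} for 1 ≤ i ≤ r and G ∈ k[y][[x,z]]. Then x^i divides a_i for 1 ≤ i ≤ r − 1, and x^{r−1} divides a_r. -/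
/-!
Substituting `y + α` for `y` sends each coefficient `p ∈ k[y]` of `F` to its Taylor expansion
at `α`, whose `y^j`-coefficient is the `j`-th Hasse derivative of `p` evaluated at `α`. A
polynomial vanishing at infinitely many points is zero, so each vanishing condition that holds
for infinitely many `α` kills the corresponding Hasse derivative. With `j = 0` this gives the
coefficients of `x^s z^(r-i)` directly; with `j = 1` the coefficient of `x^s` has zero
derivative, hence is constant in characteristic zero, and that constant is zero by hypothesis.
-/

open Polynomial

namespace Polynomial

theorem aeval_X_add_C_eq_taylor {R : Type*} [CommSemiring R] (α : R) (p : R[X]) :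
    aeval (X + C α) p = taylor α p := by
  rw [taylor_apply, comp_eq_aeval]

theorem hasseDeriv_eq_zero_of_infinite_taylor_coeff_eq_zero {R : Type*} [CommRing R]
    [IsDomain R] {p : R[X]} {j : ℕ} (h : {α : R | (taylor α p).coeff j = 0}.Infinite) :
    hasseDeriv j p = 0 :=
  eq_zero_of_infinite_isRoot _ <| by simpa only [taylor_coeff, IsRoot.def] using h

theorem eq_zero_of_derivative_eq_zero_of_coeff_zero {R : Type*} [Semiring R]
    [IsAddTorsionFree R] {p : R[X]} (hd : derivative p = 0) (h0 : p.coeff 0 = 0) : p = 0 := by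
  rw [eq_C_of_natDegree_eq_zero (derivative_eq_zero.mp hd), h0, C_0]

end Polynomial

theorem MvPowerSeries.coeff_map_aeval_X_add_C {σ R : Type*} [CommSemiring R] (α : R)
    (n : σ →₀ ℕ) (F : MvPowerSeries σ R[X]) :
    coeff n (map (Polynomial.aeval (Polynomial.X + Polynomial.C α)).toRingHom F) =
      taylor α (coeff n F) := by
  rw [coeff_map, AlgHom.toRingHom_eq_coe, RingHom.coe_coe, aeval_X_add_C_eq_taylor]

theorem one_point_form_along_curve_general
    (k : Type*) [Field k] [CharZero k]
    (r : ℕ)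
    (F : MvPowerSeries (Fin 2) (Polynomial k))
    (h0 : ∀ i : ℕ,
      (MvPowerSeries.coeff (R := Polynomial k) (Finsupp.single 0 i) F).coeff 0 = 0)
    (hinf : {α : k | ∀ i j kk : ℕ, 0 < j + kk → i + j + kk < r →
      (MvPowerSeries.coeff (R := Polynomial k) (Finsupp.single 0 i + Finsupp.single 1 kk)
        (MvPowerSeries.map (σ := Fin 2)
          ((Polynomial.aeval (R := k) (Polynomial.X + Polynomial.C α)).toRingHom)
          F)).coeff j = 0}.Infinite) :
    (∀ i : ℕ, 1 ≤ i → i ≤ r - 1 → ∀ s : ℕ, s < i →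
      MvPowerSeries.coeff (R := Polynomial k)
        (Finsupp.single 0 s + Finsupp.single 1 (r - i)) F = 0) ∧
    (∀ s : ℕ, s < r - 1 →
      MvPowerSeries.coeff (R := Polynomial k) (Finsupp.single 0 s) F = 0) := by
  simp only [MvPowerSeries.coeff_map_aeval_X_add_C] at hinf
  constructor
  · intro i _ hi s hs
    have h : hasseDeriv 0 (MvPowerSeries.coeff (Finsupp.single 0 s + Finsupp.single 1 (r - i)) F)
        = 0 :=
      hasseDeriv_eq_zero_of_infinite_taylor_coeff_eq_zero <|
        hinf.mono fun _ hα ↦ by exact hα s 0 (r - i) (by omega) (by omega)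
    rwa [hasseDeriv_zero, LinearMap.id_apply] at h
  · intro s hs
    have h : hasseDeriv 1 (MvPowerSeries.coeff (Finsupp.single 0 s + Finsupp.single 1 0) F) = 0 :=
      hasseDeriv_eq_zero_of_infinite_taylor_coeff_eq_zero <|
        hinf.mono fun _ hα ↦ by exact hα s 1 0 (by omega) (by omega)
    rw [hasseDeriv_one, Finsupp.single_zero, add_zero] at h
    exact eq_zero_of_derivative_eq_zero_of_coeff_zero h (h0 s)

/-- let `F ∈ k[y][[x,z]]` (a power series in `x, z` with coefficients which
are polynomials in `y`), with no monomials which are pure powers of `x`.  If for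
infinitely many `α ∈ k` the series obtained by substituting `y + α` for `y` has vanishing
`x^i y^j z^k`-coefficient whenever `j + k > 0` and `i + j + k < r`, then writing
`F = a_r + a_{r−1} z + ⋯ + a_1 z^{r−1} + G z^r`, one has `x^i ∣ a_i` for `1 ≤ i ≤ r−1`
and `x^{r−1} ∣ a_r`.  (Here the power series variables are indexed by `0 ↦ x` and
`1 ↦ z`.) -/
theorem one_point_form_along_curve
    (k : Type*) [Field k] [CharZero k]
    (r : ℕ) (hr : 2 ≤ r)
    (F : MvPowerSeries (Fin 2) (Polynomial k))
    (h0 : ∀ i : ℕ,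
      (MvPowerSeries.coeff (R := Polynomial k) (Finsupp.single 0 i) F).coeff 0 = 0)
    (hinf : {α : k | ∀ i j kk : ℕ, 0 < j + kk → i + j + kk < r →
      (MvPowerSeries.coeff (R := Polynomial k) (Finsupp.single 0 i + Finsupp.single 1 kk)
        (MvPowerSeries.map (σ := Fin 2)
          ((Polynomial.aeval (R := k) (Polynomial.X + Polynomial.C α)).toRingHom)
          F)).coeff j = 0}.Infinite) :
    (∀ i : ℕ, 1 ≤ i → i ≤ r - 1 → ∀ s : ℕ, s < i →
      MvPowerSeries.coeff (R := Polynomial k)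
        (Finsupp.single 0 s + Finsupp.single 1 (r - i)) F = 0) ∧
    (∀ s : ℕ, s < r - 1 →
      MvPowerSeries.coeff (R := Polynomial k) (Finsupp.single 0 s) F = 0) :=
  one_point_form_along_curve_general k r F h0 hinf
end

section
/- Let k be an algebraically closed field of characteristic zero, let A = k[[X,Y,Z]], and let u, v lie in the maximal ideal of A. Suppose (x, y, z) and (x₁, y₁, z₁) are two regular systems of parameters of A (triples of elements generating the maximal ideal) with u = x^a = x₁^a for some a ≥ 1, and suppose v is not a power series in x. Let v = P(x) + x^b F and v = P₁(x₁) + x₁^{b₁} F₁ be the normalized presentations of v with respect to the two coordinate systems: P(x) (resp. P₁(x₁)) collects all monomials of v that are powers of x (resp. of x₁) in the respective coordinates, and x^b (resp. x₁^{b₁}) is the largest power of x (resp. x₁) dividing the remainder, so that x does not divide F and F has no nonzero monomial that is a power of x (and similarly for F₁). Write F = Σ a_{ijk} x^i y^j z^k and F₁ = Σ a'_{ijk} x₁^i y₁^j z₁^k in the respective coordinates, and set r = ord(F). Then: (1) ord(F) = ord(F₁); (2) ord(F(0, y, z)) = ord(F₁(0, y₁, z₁)), where F(0, y, z) denotes the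 series obtained by setting x = 0 in the coordinate expansion of F; and (3) max{ j + k : a_{ijk} ≠ 0 and i + j + k = r } = max{ j + k : a'_{ijk} ≠ 0 and i + j + k = r }. -/
noncomputable section

/-- The order (minimal total degree of a monomial with nonzero coefficient) of a
three-variable formal power series, as an extended natural number. -/
def ordm3 {k : Type*} [Field k] (F : MvPowerSeries (Fin 3) k) : ℕ∞ :=
  sInf {n : ℕ∞ | ∃ d : Fin 3 →₀ ℕ, MvPowerSeries.coeff d F ≠ 0 ∧
    n = ((d 0 + d 1 + d 2 : ℕ) : ℕ∞)}

/-- The series `F(0, y, z)` obtained by setting the first variable equal to `0`. -/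
def restrictX0 {k : Type*} [Field k] (F : MvPowerSeries (Fin 3) k) :
    MvPowerSeries (Fin 3) k :=
  fun d => if d 0 = 0 then MvPowerSeries.coeff d F else 0

/-- The series `p(x)` in `k[[x,y,z]]` obtained from a one-variable power series `p`. -/
def pevX {k : Type*} [Field k] (p : PowerSeries k) : MvPowerSeries (Fin 3) k :=
  fun d => if d 1 = 0 ∧ d 2 = 0 then PowerSeries.coeff (d 0) p else 0

/-- `F` has no nonzero monomial which is a power of `x`. -/
def NoPureXTerms3 {k : Type*} [Field k] (F : MvPowerSeries (Fin 3) k) : Prop :=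
  ∀ d : Fin 3 →₀ ℕ, d 1 = 0 → d 2 = 0 → MvPowerSeries.coeff d F = 0

/-!
A change between the two coordinate systems is an automorphism `τ` of `k⟦x, y, z⟧` fixing
`x^a`. Then `τ x` is an `a`-th root of `x^a`, and as the only roots of unity in `k⟦x, y, z⟧`
are constants (characteristic zero), `τ x = ζ x`. Such a `τ` maps series in `x` alone to series
in `x` alone, so comparing the parts of `τ v` without pure powers of `x` gives
`x^b' F' = ζ^b x^b (τ F - Q)`, where `Q` collects the pure powers of `x` in `τ F`; as `x`
divides neither `F'` nor `τ F - Q`, this forces `F' = ζ^b (τ F - Q)`. Now `τ` preserves the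
order, `(τ F)(0, y, z)` depends only on `F(0, y, z)`, and divisibility of the degree `r` form
of `F` by a power of `x` passes to `τ F`; removing `Q` spoils none of this. So each invariant
of `F'` is at least that of `F` (the third one read as the least `m` such that `x^(r - m)`
divides the degree `r` form), and symmetry concludes.
-/

theorem eq_of_pow_mul_eq_pow_mul {M : Type*} [CommMonoidWithZero M] [IsLeftCancelMulZero M]
    {x f g : M} {m n : ℕ} (hx : x ≠ 0) (hf : ¬ x ∣ f) (hg : ¬ x ∣ g)
    (h : x ^ m * f = x ^ n * g) : f = g := by
  wlog hmn : m ≤ n generalizing m n f g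
  · exact (this hg hf h.symm (le_of_not_ge hmn)).symm
  obtain ⟨e, rfl⟩ := Nat.exists_eq_add_of_le hmn
  rw [pow_add, mul_assoc] at h
  cases e with
  | zero => simpa using mul_left_cancel₀ (pow_ne_zero m hx) h
  | succ e =>
    refine absurd ⟨x ^ e * g, ?_⟩ hf
    rw [mul_left_cancel₀ (pow_ne_zero m hx) h, pow_succ', mul_assoc]

theorem csSup_eq_csSup_of_upperBounds_eq {α : Type*} [ConditionallyCompleteLinearOrderBot α]
    {s t : Set α} (hs : BddAbove s) (h : upperBounds s = upperBounds t) : sSup s = sSup t := by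
  have ht : BddAbove t := by rwa [BddAbove, ← h]
  refine (isLUB_csSup' hs).unique ?_
  rw [IsLUB, h]
  exact isLUB_csSup' ht

namespace MvPowerSeries

open Finsupp

section CommSemiring

variable {σ R : Type*} [CommSemiring R]

theorem coeff_X_mul [DecidableEq σ] (s : σ) (d : σ →₀ ℕ) (g : MvPowerSeries σ R) :
    coeff d (X s * g) = if d s = 0 then 0 else coeff (d - single s 1) g := by
  simp only [X_def, coeff_monomial_mul, single_le_iff, one_mul, Nat.one_le_iff_ne_zero]
  split_ifs <;> first | rfl | contradiction

theorem X_dvd_iff_weightedHomogeneousComponent_eq_zero [DecidableEq σ] {s : σ}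
    {f : MvPowerSeries σ R} :
    X s ∣ f ↔ weightedHomogeneousComponent (Pi.single s 1) 0 f = 0 := by
  simp only [X_dvd_iff, MvPowerSeries.ext_iff, coeff_weightedHomogeneousComponent,
    weight_single_one_apply, map_zero, ite_eq_right_iff]

theorem X_pow_dvd_weightedHomogeneousComponent {s : σ} {n : ℕ} {f : MvPowerSeries σ R}
    (w : σ → ℕ) (p : ℕ) (h : X s ^ n ∣ f) :
    X s ^ n ∣ weightedHomogeneousComponent w p f := by
  rw [X_pow_dvd_iff] at h ⊢
  intro d hd
  rw [coeff_weightedHomogeneousComponent, h d hd, ite_self]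

theorem weightedHomogeneousComponent_comm (w w' : σ → ℕ) (p p' : ℕ)
    (f : MvPowerSeries σ R) :
    weightedHomogeneousComponent w p (weightedHomogeneousComponent w' p' f) =
      weightedHomogeneousComponent w' p' (weightedHomogeneousComponent w p f) := by
  ext d
  simp only [coeff_weightedHomogeneousComponent]
  split_ifs <;> rfl

theorem le_order_weightedHomogeneousComponent (w : σ → ℕ) (p : ℕ) (f : MvPowerSeries σ R) :
    f.order ≤ (weightedHomogeneousComponent w p f).order :=
  le_order fun d hd => by rw [coeff_weightedHomogeneousComponent, coeff_of_lt_order hd, ite_self]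

/-- The summand `X i * g i` collects the monomials of `f` whose smallest variable, for some linear
order on `σ`, is `X i`. -/
theorem exists_eq_sum_X_mul_of_lt_order [Fintype σ] {f : MvPowerSeries σ R} {n : ℕ}
    (hf : n < f.order) :
    ∃ g : σ → MvPowerSeries σ R, (∀ i, n ≤ (g i).order) ∧ f = ∑ i, X i * g i := by
  classical
  let _ : LinearOrder σ := LinearOrder.lift' _ (Fintype.equivFin σ).injective
  set g : σ → MvPowerSeries σ R :=
    fun i e => if ∀ j < i, e j = 0 then coeff (e + single i 1) f else 0
  have coeff_g : ∀ i e,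
      coeff e (g i) = if ∀ j < i, e j = 0 then coeff (e + single i 1) f else 0 :=
    fun _ _ => rfl
  refine ⟨g, fun i => nat_le_order fun e he => ?_, ?_⟩
  · rw [coeff_g, coeff_of_lt_order (lt_of_le_of_lt (by simp [map_add]; exact_mod_cast he) hf),
      ite_self]
  ext d
  rw [map_sum]
  simp only [coeff_X_mul, coeff_g]
  by_cases hd : d = 0
  · subst hd
    simp only [Finsupp.coe_zero, Pi.zero_apply, ite_true, Finset.sum_const_zero]
    exact coeff_of_lt_order (by simpa using pos_of_gt hf)
  set i₀ := d.support.min' (support_nonempty_iff.mpr hd)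
  have hi₀ : d i₀ ≠ 0 := mem_support_iff.mp (Finset.min'_mem _ _)
  have hlt : ∀ j < i₀, d j = 0 := fun j hj =>
    notMem_support_iff.mp fun hjd => (Finset.min'_le _ j hjd).not_gt hj
  rw [Finset.sum_eq_single i₀, if_neg hi₀, if_pos]
  · rw [tsub_add_cancel_of_le (single_le_iff.mpr (Nat.one_le_iff_ne_zero.mpr hi₀))]
  · intro j hj; rw [tsub_apply, single_eq_of_ne hj.ne, hlt j hj, tsub_zero]
  · intro i _ hi
    split_ifs with hdi hcond
    · rfl
    · have := hcond i₀ ((Finset.min'_le _ i (mem_support_iff.mpr hdi)).lt_of_ne' hi)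
      rw [tsub_apply, single_eq_of_ne hi.symm, tsub_zero] at this
      exact absurd this hi₀
    · rfl
  · simp

end CommSemiring

section CommRing

variable {σ R : Type*} [CommRing R]

theorem X_dvd_sub_weightedHomogeneousComponent [DecidableEq σ] (s : σ) (f : MvPowerSeries σ R) :
    X s ∣ f - weightedHomogeneousComponent (Pi.single s 1) 0 f := by
  rw [X_dvd_iff_weightedHomogeneousComponent_eq_zero, map_sub,
    ← isWeightedHomogeneous_iff_eq_weightedHomogeneousComponent.mp
      (isWeightedHomogeneous_weightedHomogeneousComponent _ f 0), sub_self]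

/-- Setting `X s = 0` commutes with an endomorphism that maps `X s` into the ideal `(X s)`. -/
theorem weightedHomogeneousComponent_zero_algHom_apply [DecidableEq σ] {s : σ}
    (φ : MvPowerSeries σ R →ₐ[R] MvPowerSeries σ R) (hφ : X s ∣ φ (X s))
    (f : MvPowerSeries σ R) :
    weightedHomogeneousComponent (Pi.single s 1) 0 (φ f) =
      weightedHomogeneousComponent (Pi.single s 1) 0
        (φ (weightedHomogeneousComponent (Pi.single s 1) 0 f)) := by
  rw [← sub_eq_zero, ← map_sub, ← map_sub, ← X_dvd_iff_weightedHomogeneousComponent_eq_zero]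
  exact hφ.trans (map_dvd φ (X_dvd_sub_weightedHomogeneousComponent s f))

theorem lt_order_sub_homogeneousComponent {f : MvPowerSeries σ R} {r : ℕ} (hf : r ≤ f.order) :
    r < (f - homogeneousComponent r f).order := by
  have : ((r + 1 : ℕ) : ℕ∞) ≤ (f - homogeneousComponent r f).order := by
    refine nat_le_order fun d hd => ?_
    rw [map_sub, coeff_homogeneousComponent]
    split_ifs with hdr
    · exact sub_self _
    · rw [coeff_of_lt_order ((Nat.cast_lt.mpr (by omega)).trans_le hf), sub_zero]
  exact (ENat.add_one_le_iff (ENat.natCast_ne_top r)).mp (by exact_mod_cast this)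

theorem X_prime [IsDomain R] (s : σ) : Prime (X s : MvPowerSeries σ R) := by
  classical
  refine ⟨fun h => by simpa using congrArg (coeff (single s 1)) h, fun h => ?_, fun f g h => ?_⟩
  · simpa using (isUnit_iff_constantCoeff.mp h)
  · simp only [X_dvd_iff_weightedHomogeneousComponent_eq_zero] at h ⊢
    rwa [← zero_add 0, weightedHomogeneousComponent_mul_of_le_weightedOrder (by simp) (by simp),
      mul_eq_zero] at h

end CommRing

section Field

variable {σ τ k : Type*} [Field k]

/-- A `k`-algebra map between power series rings is local: if `φ f` had a nonzero constant term
`c`, then `φ (f - C c)` would be the image of a unit without constant term. -/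
theorem constantCoeff_algHom_apply_eq_zero (φ : MvPowerSeries σ k →ₐ[k] MvPowerSeries τ k)
    {f : MvPowerSeries σ k} (hf : constantCoeff f = 0) : constantCoeff (φ f) = 0 := by
  by_contra hc
  have hunit : IsUnit (f - C (constantCoeff (φ f))) := by
    rw [isUnit_iff_constantCoeff, map_sub, hf, constantCoeff_C, zero_sub, isUnit_iff_ne_zero,
      neg_ne_zero]
    exact hc
  have := isUnit_iff_constantCoeff.mp (hunit.map φ)
  rw [map_sub, c_eq_algebraMap, φ.commutes, ← c_eq_algebraMap, map_sub, constantCoeff_C,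
    sub_self] at this
  exact not_isUnit_zero this

theorem le_order_algHom_apply [Fintype σ] (φ : MvPowerSeries σ k →ₐ[k] MvPowerSeries τ k)
    (f : MvPowerSeries σ k) : f.order ≤ (φ f).order := by
  refine ENat.forall_natCast_le_iff_le.mp fun n => ?_
  induction n generalizing f with
  | zero => simp
  | succ n ih =>
    intro hn
    obtain ⟨g, hg, rfl⟩ := exists_eq_sum_X_mul_of_lt_order
      ((ENat.add_one_le_iff (ENat.natCast_ne_top n)).mp (by exact_mod_cast hn))
    refine nat_le_order fun d hd => ?_
    rw [map_sum, map_sum]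
    refine Finset.sum_eq_zero fun i _ => coeff_of_lt_order ((Nat.cast_lt.mpr hd).trans_le ?_)
    calc ((n + 1 : ℕ) : ℕ∞) = 1 + n := by push_cast; ring
      _ ≤ (φ (X i)).order + (φ (g i)).order := add_le_add
          (one_le_order_iff_constCoeff_eq_zero.mpr
            (constantCoeff_algHom_apply_eq_zero φ (constantCoeff_X i)))
          (ih (g i) (hg i))
      _ ≤ (φ (X i * g i)).order := by rw [map_mul]; exact le_order_mul

/-- For `x = C c⁻¹ * w`, the factor `∑ i < a, x ^ i` of `x ^ a - 1` has constant term
`a ≠ 0`, so it is a unit. -/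
theorem eq_C_of_pow_eq_one [CharZero k] {w : MvPowerSeries σ k} {a : ℕ} (ha : a ≠ 0)
    (hw : w ^ a = 1) : w = C (constantCoeff w) := by
  have hca : constantCoeff w ^ a = 1 := by rw [← map_pow, hw, map_one]
  have hc : constantCoeff w ≠ 0 := fun h => by simp [h, ha] at hca
  set x := C (constantCoeff w)⁻¹ * w
  have hx : x ^ a = 1 := by
    rw [mul_pow, ← map_pow, hw, inv_pow, hca, inv_one, map_one, one_mul]
  have hunit : IsUnit (∑ i ∈ Finset.range a, x ^ i) := by
    rw [isUnit_iff_constantCoeff, map_sum]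
    simp [x, hc, ha]
  have : x - 1 = 0 := hunit.mul_right_eq_zero.mp (by rw [geom_sum_mul, hx, sub_self])
  calc w = C (constantCoeff w) * x := by
        rw [← mul_assoc, ← map_mul, mul_inv_cancel₀ hc, map_one, one_mul]
    _ = C (constantCoeff w) := by rw [sub_eq_zero.mp this, mul_one]

theorem exists_eq_C_mul_X_of_pow_eq_X_pow [CharZero k] {t : MvPowerSeries σ k} {s : σ} {a : ℕ}
    (ha : a ≠ 0) (ht : t ^ a = X s ^ a) : ∃ ζ : k, ζ ≠ 0 ∧ t = C ζ * X s := by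
  obtain ⟨w, rfl⟩ := (X_prime s).dvd_of_dvd_pow (ht ▸ dvd_pow_self (X s) ha)
  have hw : w ^ a = 1 := by
    rw [mul_pow] at ht
    exact mul_left_cancel₀ (pow_ne_zero a (X_prime s).ne_zero) (ht.trans (mul_one _).symm)
  refine ⟨constantCoeff w, fun h => ?_, by rw [mul_comm, ← eq_C_of_pow_eq_one ha hw]⟩
  have := congrArg constantCoeff hw
  simp [h, ha] at this

theorem homogeneousComponent_algHom_apply [Fintype σ]
    (φ : MvPowerSeries σ k →ₐ[k] MvPowerSeries τ k) {f : MvPowerSeries σ k} {r : ℕ}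
    (hf : r ≤ f.order) :
    homogeneousComponent r (φ f) = homogeneousComponent r (φ (homogeneousComponent r f)) := by
  rw [← sub_eq_zero, ← map_sub, ← map_sub]
  exact homogeneousComponent_of_lt_order_eq_zero
    ((lt_order_sub_homogeneousComponent hf).trans_le (le_order_algHom_apply φ _))

end Field

end MvPowerSeries

namespace OnePointPresentation

open MvPowerSeries Finsupp

variable {k : Type*} [Field k]

theorem degree_fin_three (d : Fin 3 →₀ ℕ) : degree d = d 0 + d 1 + d 2 := by
  rw [degree_eq_sum, Fin.sum_univ_three]

theorem ordm3_eq_order (F : MvPowerSeries (Fin 3) k) : ordm3 F = F.order := by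
  refine le_antisymm ?_ (le_sInf ?_)
  · by_cases hF : F = 0
    · simp [hF]
    obtain ⟨d, hd, hdeg⟩ := exists_coeff_ne_zero_and_order (ne_zero_iff_order_finite.mp hF)
    exact sInf_le ⟨d, hd, by rw [← hdeg, degree_fin_three]⟩
  · rintro _ ⟨d, hd, rfl⟩
    simpa [degree_fin_three] using order_le hd

theorem _root_.NoPureXTerms3.constantCoeff_eq_zero {F : MvPowerSeries (Fin 3) k}
    (h : NoPureXTerms3 F) : constantCoeff F = 0 := by
  simpa using h 0 rfl rfl

theorem restrictX0_eq (S : MvPowerSeries (Fin 3) k) :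
    restrictX0 S = weightedHomogeneousComponent (Pi.single 0 1) 0 S := by
  ext d
  rw [coeff_weightedHomogeneousComponent, weight_single_one_apply]
  rfl

/-- The weight `(0, 1, 1)`: monomials of weight zero are exactly the powers of `x`. -/
def yzWeight : Fin 3 → ℕ := ![0, 1, 1]

theorem weight_yzWeight (d : Fin 3 →₀ ℕ) : weight yzWeight d = d 1 + d 2 := by
  simp [weight_eq_sum, Fin.sum_univ_three, yzWeight]

/-- The sum `P(x)` of the monomials of a series that are powers of `x`. -/
def xPart : MvPowerSeries (Fin 3) k →ₗ[k] MvPowerSeries (Fin 3) k :=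
  weightedHomogeneousComponent yzWeight 0

theorem coeff_xPart (d : Fin 3 →₀ ℕ) (S : MvPowerSeries (Fin 3) k) :
    coeff d (xPart S) = if d 1 = 0 ∧ d 2 = 0 then coeff d S else 0 := by
  simp only [xPart, coeff_weightedHomogeneousComponent, weight_yzWeight, Nat.add_eq_zero_iff]

theorem xPart_eq_zero_iff {S : MvPowerSeries (Fin 3) k} : xPart S = 0 ↔ NoPureXTerms3 S := by
  simp [MvPowerSeries.ext_iff, coeff_xPart, NoPureXTerms3, and_imp]

theorem xPart_pevX (p : PowerSeries k) : xPart (pevX p) = pevX p := by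
  ext d
  rw [coeff_xPart]
  split_ifs with hd
  · rfl
  · exact (if_neg hd).symm

theorem xPart_C (c : k) : xPart (C c : MvPowerSeries (Fin 3) k) = C c := by
  ext d
  rw [coeff_xPart, coeff_C]
  split_ifs with hd h0 <;> simp_all

theorem xPart_X_pow_mul (b : ℕ) (S : MvPowerSeries (Fin 3) k) :
    xPart (X 0 ^ b * S) = X 0 ^ b * xPart S := by
  ext d
  simp only [coeff_xPart, X_pow_eq, coeff_monomial_mul, tsub_apply,
    single_eq_of_ne (show (1 : Fin 3) ≠ 0 by decide),
    single_eq_of_ne (show (2 : Fin 3) ≠ 0 by decide), tsub_zero]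
  split_ifs <;> simp

theorem restrictX0_xPart (S : MvPowerSeries (Fin 3) k) :
    restrictX0 (xPart S) = C (constantCoeff S) := by
  ext d
  have hd : d = 0 ↔ d 0 = 0 ∧ d 1 = 0 ∧ d 2 = 0 := by
    rw [← degree_eq_zero_iff, degree_fin_three]; omega
  rw [restrictX0_eq, coeff_weightedHomogeneousComponent, weight_single_one_apply, coeff_xPart,
    coeff_C]
  split_ifs <;> simp_all

theorem X_dvd_xPart {S : MvPowerSeries (Fin 3) k} (hS : constantCoeff S = 0) :
    X 0 ∣ xPart S := by
  rw [X_dvd_iff_weightedHomogeneousComponent_eq_zero, ← restrictX0_eq, restrictX0_xPart, hS,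
    map_zero]

theorem exists_eq_C_add_X_mul_of_xPart_eq {S : MvPowerSeries (Fin 3) k} (hS : xPart S = S) :
    ∃ T, xPart T = T ∧ S = C (constantCoeff S) + X 0 * T := by
  have hdiff : xPart (S - C (constantCoeff S)) = S - C (constantCoeff S) := by
    rw [map_sub, hS, xPart_C]
  obtain ⟨T, hT⟩ : X 0 ∣ S - C (constantCoeff S) := by
    rw [← hdiff]
    exact X_dvd_xPart (by simp)
  refine ⟨T, mul_left_cancel₀ (X_prime 0).ne_zero ?_, by rw [← hT, add_sub_cancel]⟩
  rw [← pow_one (X 0), ← xPart_X_pow_mul, pow_one, ← hT, hdiff]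

/-- Induction on the `x`-degree of a monomial `x^i y^j z^k` with `j + k ≠ 0`, writing
`S = S(0) + x T` with `T` again a series in `x` alone. -/
theorem xPart_algHom_apply (φ : MvPowerSeries (Fin 3) k →ₐ[k] MvPowerSeries (Fin 3) k) {ζ : k}
    (hφ : φ (X 0) = C ζ * X 0) {S : MvPowerSeries (Fin 3) k} (hS : xPart S = S) :
    xPart (φ S) = φ S := by
  suffices h : ∀ n (S : MvPowerSeries (Fin 3) k), xPart S = S →
      ∀ d : Fin 3 →₀ ℕ, d 0 < n → ¬(d 1 = 0 ∧ d 2 = 0) → coeff d (φ S) = 0 by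
    ext d
    rw [coeff_xPart]
    split_ifs with hd
    · rfl
    · exact (h _ S hS d (Nat.lt_succ_self _) hd).symm
  intro n
  induction n with
  | zero => intro S _ d hd; omega
  | succ n ih =>
    intro S hS d hd hyz
    obtain ⟨T, hT, hST⟩ := exists_eq_C_add_X_mul_of_xPart_eq hS
    have hd0 : d ≠ 0 := by rintro rfl; exact hyz ⟨rfl, rfl⟩
    rw [hST, map_add, map_mul, hφ, c_eq_algebraMap, φ.commutes, ← c_eq_algebraMap, mul_assoc,
      map_add, coeff_C, if_neg hd0, coeff_C_mul, coeff_X_mul]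
    split_ifs with hdx
    · simp
    · rw [ih T hT _ (by simp; omega) (by simpa using hyz), mul_zero, zero_add]

theorem sub_xPart_add_X_pow_mul {Q : MvPowerSeries (Fin 3) k} (hQ : xPart Q = Q) (b : ℕ)
    (S : MvPowerSeries (Fin 3) k) :
    Q + X 0 ^ b * S - xPart (Q + X 0 ^ b * S) = X 0 ^ b * (S - xPart S) := by
  rw [map_add, xPart_X_pow_mul, hQ]
  ring

def IsNormalizedPresentation (v : MvPowerSeries (Fin 3) k) (P : PowerSeries k) (b : ℕ)
    (F : MvPowerSeries (Fin 3) k) : Prop :=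
  v = pevX P + X 0 ^ b * F ∧ ¬ X 0 ∣ F ∧ NoPureXTerms3 F

theorem IsNormalizedPresentation.sub_xPart {v : MvPowerSeries (Fin 3) k} {P : PowerSeries k}
    {b : ℕ} {F : MvPowerSeries (Fin 3) k} (h : IsNormalizedPresentation v P b F) :
    v - xPart v = X 0 ^ b * F := by
  rw [h.1, sub_xPart_add_X_pow_mul (xPart_pevX P), xPart_eq_zero_iff.mpr h.2.2, sub_zero]

theorem IsNormalizedPresentation.eq_smul_sub_xPart
    (τ : MvPowerSeries (Fin 3) k ≃ₐ[k] MvPowerSeries (Fin 3) k) {ζ : k} (hζ : ζ ≠ 0)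
    (hτ : τ (X 0) = C ζ * X 0) {v : MvPowerSeries (Fin 3) k}
    {P P' : PowerSeries k} {b b' : ℕ} {F F' : MvPowerSeries (Fin 3) k}
    (h : IsNormalizedPresentation v P b F) (h' : IsNormalizedPresentation (τ v) P' b' F') :
    F' = ζ ^ b • (τ F - xPart (τ F)) := by
  have hτv : τ v = τ (pevX P) + X 0 ^ b * (ζ ^ b • τ F) := by
    rw [h.1, map_add, map_mul, map_pow, hτ, smul_eq_C_mul, map_pow, mul_pow]
    ring
  have hτF : constantCoeff (τ F) = 0 := constantCoeff_algHom_apply_eq_zero τ.toAlgHom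
    h.2.2.constantCoeff_eq_zero
  have isUnit_C : ∀ {c : k}, c ≠ 0 → IsUnit (C c : MvPowerSeries (Fin 3) k) :=
    fun hc => (isUnit_iff_ne_zero.mpr hc).map C
  refine eq_of_pow_mul_eq_pow_mul (m := b') (n := b) (X_prime 0).ne_zero h'.2.1
    (fun hdvd => h.2.1 ?_) ?_
  · rw [smul_eq_C_mul, (isUnit_C (pow_ne_zero b hζ)).dvd_mul_left,
      dvd_sub_left (X_dvd_xPart hτF)] at hdvd
    rwa [← map_dvd_iff τ, hτ, (isUnit_C hζ).mul_left_dvd]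
  · have hpure : xPart (τ (pevX P)) = τ (pevX P) :=
      xPart_algHom_apply τ.toAlgHom hτ (xPart_pevX P)
    rw [← h'.sub_xPart, hτv, sub_xPart_add_X_pow_mul hpure, map_smul, smul_sub]

section Invariance

variable (φ : MvPowerSeries (Fin 3) k →ₐ[k] MvPowerSeries (Fin 3) k)
  {F F' : MvPowerSeries (Fin 3) k} {c : k}

theorem order_le_order_of_eq_smul_sub_xPart (hF' : F' = c • (φ F - xPart (φ F))) :
    F.order ≤ F'.order :=
  calc F.order ≤ (φ F).order := le_order_algHom_apply φ F
    _ ≤ (φ F - xPart (φ F)).order := by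
      rw [sub_eq_add_neg]
      refine le_trans (le_min le_rfl ?_) min_order_le_add
      rw [order_neg]
      exact le_order_weightedHomogeneousComponent _ _ _
    _ ≤ F'.order := hF' ▸ le_order_smul

theorem order_restrictX0_le_of_eq_smul_sub_xPart (hφ : X 0 ∣ φ (X 0))
    (hF : constantCoeff F = 0) (hF' : F' = c • (φ F - xPart (φ F))) :
    (restrictX0 F).order ≤ (restrictX0 F').order := by
  have h : restrictX0 F' =
      c • weightedHomogeneousComponent (Pi.single 0 1) 0 (φ (restrictX0 F)) := by
    rw [hF', restrictX0_eq, restrictX0_eq, map_smul, map_sub, ← restrictX0_eq (xPart (φ F)),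
      restrictX0_xPart, constantCoeff_algHom_apply_eq_zero φ hF, map_zero, sub_zero,
      weightedHomogeneousComponent_zero_algHom_apply φ hφ]
  calc (restrictX0 F).order ≤ (φ (restrictX0 F)).order := le_order_algHom_apply φ _
    _ ≤ (weightedHomogeneousComponent (Pi.single 0 1) 0 (φ (restrictX0 F))).order :=
      le_order_weightedHomogeneousComponent _ _ _
    _ ≤ (restrictX0 F').order := h ▸ le_order_smul

theorem X_pow_dvd_homogeneousComponent_of_eq_smul_sub_xPart (hφ : X 0 ∣ φ (X 0)) {r j : ℕ}
    (hr : r ≤ F.order) (hF' : F' = c • (φ F - xPart (φ F)))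
    (h : X 0 ^ j ∣ homogeneousComponent r F) : X 0 ^ j ∣ homogeneousComponent r F' := by
  have hφF : X 0 ^ j ∣ homogeneousComponent r (φ F) := by
    rw [homogeneousComponent_algHom_apply φ hr]
    refine X_pow_dvd_weightedHomogeneousComponent _ _ ((pow_dvd_pow_of_dvd hφ j).trans ?_)
    rw [← map_pow]
    exact map_dvd φ h
  have hφF' : X 0 ^ j ∣ homogeneousComponent r (xPart (φ F)) := by
    rw [xPart, homogeneousComponent, weightedHomogeneousComponent_comm]
    exact X_pow_dvd_weightedHomogeneousComponent _ _ hφF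
  rw [hF', map_smul, map_sub, smul_eq_C_mul]
  exact dvd_mul_of_dvd_right (dvd_sub hφF hφF') _

end Invariance

theorem mem_upperBounds_iff_X_pow_dvd (F : MvPowerSeries (Fin 3) k) (r m : ℕ) :
    m ∈ upperBounds {m : ℕ | ∃ d : Fin 3 →₀ ℕ, coeff d F ≠ 0 ∧
        d 0 + d 1 + d 2 = r ∧ d 1 + d 2 = m} ↔
      X 0 ^ (r - m) ∣ homogeneousComponent r F := by
  simp only [mem_upperBounds, Set.mem_ofPred_eq, X_pow_dvd_iff, coeff_homogeneousComponent,
    degree_fin_three, forall_exists_index, and_imp]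
  constructor
  · intro h d hd
    split_ifs with hdr
    · by_contra hne
      have := h _ d hne hdr rfl
      omega
    · rfl
  · rintro h _ d hne hdr rfl
    by_contra hlt
    exact hne (by simpa [hdr] using h d (by omega))

theorem exists_symm_trans_X_eq_C_mul_X [CharZero k] {u : MvPowerSeries (Fin 3) k} {a : ℕ}
    (ha : a ≠ 0) {σ σ' : MvPowerSeries (Fin 3) k ≃ₐ[k] MvPowerSeries (Fin 3) k}
    (hσ : σ u = X 0 ^ a) (hσ' : σ' u = X 0 ^ a) :
    ∃ ζ : k, ζ ≠ 0 ∧ σ.symm.trans σ' (X 0) = C ζ * X 0 :=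
  exists_eq_C_mul_X_of_pow_eq_X_pow ha (by
    rw [← map_pow, ← hσ, AlgEquiv.trans_apply, AlgEquiv.symm_apply_apply, hσ', hσ])

end OnePointPresentation

open MvPowerSeries OnePointPresentation

theorem invariants_of_one_point_presentation_well_defined_general
    (k : Type*) [Field k] [CharZero k]
    (u v : MvPowerSeries (Fin 3) k)
    (a : ℕ) (ha : 1 ≤ a)
    (σ σ' : MvPowerSeries (Fin 3) k ≃ₐ[k] MvPowerSeries (Fin 3) k)
    (hσu : σ u = MvPowerSeries.X 0 ^ a)
    (hσ'u : σ' u = MvPowerSeries.X 0 ^ a)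
    (P P' : PowerSeries k) (b b' : ℕ) (F F' : MvPowerSeries (Fin 3) k)
    (hform : σ v = pevX P + MvPowerSeries.X 0 ^ b * F)
    (hFx : ¬ MvPowerSeries.X 0 ∣ F) (hFnorm : NoPureXTerms3 F)
    (hform' : σ' v = pevX P' + MvPowerSeries.X 0 ^ b' * F')
    (hF'x : ¬ MvPowerSeries.X 0 ∣ F') (hF'norm : NoPureXTerms3 F')
    (r : ℕ) (hr : ordm3 F = (r : ℕ∞)) :
    ordm3 F = ordm3 F' ∧
    ordm3 (restrictX0 F) = ordm3 (restrictX0 F') ∧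
    sSup {m : ℕ | ∃ d : Fin 3 →₀ ℕ, MvPowerSeries.coeff d F ≠ 0 ∧
        d 0 + d 1 + d 2 = r ∧ d 1 + d 2 = m} =
      sSup {m : ℕ | ∃ d : Fin 3 →₀ ℕ, MvPowerSeries.coeff d F' ≠ 0 ∧
        d 0 + d 1 + d 2 = r ∧ d 1 + d 2 = m} := by
  have hpres : IsNormalizedPresentation (σ v) P b F := ⟨hform, hFx, hFnorm⟩
  have hpres' : IsNormalizedPresentation (σ' v) P' b' F' := ⟨hform', hF'x, hF'norm⟩
  set τ := σ.symm.trans σ'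
  set τ' := σ'.symm.trans σ
  obtain ⟨ζ, hζ, hτ⟩ := exists_symm_trans_X_eq_C_mul_X (by omega) hσu hσ'u
  obtain ⟨ζ', hζ', hτ'⟩ := exists_symm_trans_X_eq_C_mul_X (by omega) hσ'u hσu
  have hF' := hpres.eq_smul_sub_xPart _ hζ hτ (by simpa using hpres')
  have hF := hpres'.eq_smul_sub_xPart _ hζ' hτ' (by simpa using hpres)
  have hτX : X 0 ∣ τ.toAlgHom (X 0) := hτ ▸ dvd_mul_left _ _
  have hτ'X : X 0 ∣ τ'.toAlgHom (X 0) := hτ' ▸ dvd_mul_left _ _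
  have hord : F.order = F'.order :=
    le_antisymm (order_le_order_of_eq_smul_sub_xPart τ.toAlgHom hF')
      (order_le_order_of_eq_smul_sub_xPart τ'.toAlgHom hF)
  rw [ordm3_eq_order] at hr
  refine ⟨by rw [ordm3_eq_order, ordm3_eq_order, hord], ?_, ?_⟩
  · rw [ordm3_eq_order, ordm3_eq_order]
    exact le_antisymm
      (order_restrictX0_le_of_eq_smul_sub_xPart _ hτX hFnorm.constantCoeff_eq_zero hF')
      (order_restrictX0_le_of_eq_smul_sub_xPart _ hτ'X hF'norm.constantCoeff_eq_zero hF)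
  · refine csSup_eq_csSup_of_upperBounds_eq ⟨r, fun m ⟨d, _, hd, hm⟩ => by omega⟩ ?_
    ext m
    rw [mem_upperBounds_iff_X_pow_dvd, mem_upperBounds_iff_X_pow_dvd]
    exact ⟨X_pow_dvd_homogeneousComponent_of_eq_smul_sub_xPart _ hτX hr.ge hF',
      X_pow_dvd_homogeneousComponent_of_eq_smul_sub_xPart _ hτ'X (hord ▸ hr.ge) hF⟩

/-- for `u = x^a` at a 1-point of `k[[X,Y,Z]]`, the invariants
`ν = ord F`, `γ = ord F(0,y,z)` and `τ = max{j+k : a certain coefficient a_{ijk} ≠ 0,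
i+j+k = ord F}` of a normalized presentation `v = P(x) + x^b F` do not depend on the
choice of the coordinate system; coordinate systems are encoded by automorphisms of
`k[[X,Y,Z]]` carrying `(u,v)` to the indicated normal forms in the standard
coordinates. -/
theorem invariants_of_one_point_presentation_well_defined
    (k : Type*) [Field k] [IsAlgClosed k] [CharZero k]
    (u v : MvPowerSeries (Fin 3) k)
    (hu : u ∈ IsLocalRing.maximalIdeal (MvPowerSeries (Fin 3) k))
    (hv : v ∈ IsLocalRing.maximalIdeal (MvPowerSeries (Fin 3) k))
    (a : ℕ) (ha : 1 ≤ a)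
    (σ σ' : MvPowerSeries (Fin 3) k ≃ₐ[k] MvPowerSeries (Fin 3) k)
    (hσu : σ u = MvPowerSeries.X 0 ^ a)
    (hσ'u : σ' u = MvPowerSeries.X 0 ^ a)
    (hvnot : ¬ ∃ p : PowerSeries k, σ v = pevX p)
    (P P' : PowerSeries k) (b b' : ℕ) (F F' : MvPowerSeries (Fin 3) k)
    (hform : σ v = pevX P + MvPowerSeries.X 0 ^ b * F)
    (hFx : ¬ MvPowerSeries.X 0 ∣ F) (hFnorm : NoPureXTerms3 F)
    (hform' : σ' v = pevX P' + MvPowerSeries.X 0 ^ b' * F')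
    (hF'x : ¬ MvPowerSeries.X 0 ∣ F') (hF'norm : NoPureXTerms3 F')
    (r : ℕ) (hr : ordm3 F = (r : ℕ∞)) :
    ordm3 F = ordm3 F' ∧
    ordm3 (restrictX0 F) = ordm3 (restrictX0 F') ∧
    sSup {m : ℕ | ∃ d : Fin 3 →₀ ℕ, MvPowerSeries.coeff d F ≠ 0 ∧
        d 0 + d 1 + d 2 = r ∧ d 1 + d 2 = m} =
      sSup {m : ℕ | ∃ d : Fin 3 →₀ ℕ, MvPowerSeries.coeff d F' ≠ 0 ∧
        d 0 + d 1 + d 2 = r ∧ d 1 + d 2 = m} :=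
  invariants_of_one_point_presentation_well_defined_general k u v a ha σ σ' hσu hσ'u P P' b b' F F'
    hform hFx hFnorm hform' hF'x hF'norm r hr

end
end
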